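/- arXiv:2009.08262 — 8 statements merged into one kernel-verified Lean document; each statement's English description precedes it below -/
import Mathlib

section
/- Let a ∈ H and g ∈ H', set h = a + K*(g − Ka), and for each γ ∈ Γ let t_γ = S_{w_γ,p_γ}(h_γ) be the unique minimizer of x ↦ x² − 2 h_γ x + w_γ |x|^{p_γ}. Then Σ_γ t_γ² < ∞, so f_min = Σ_γ t_γ e_γ defines an element of H, and for every h' ∈ H one has Φ^sur(f_min + h'; a) ≥ Φ^sur(f_min; a) + ‖h'‖² (as an inequality in [0,∞]); in particular f_min is the unique minimizer of f ↦ Φ^sur(f; a) over H. -/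
open scoped RealInnerProductSpace ENNReal

/-!
Expanding the norms, the quadratic part of `Φ^sur(f; a)` is `‖f‖² - 2⟪f, h⟫` up to a constant, so
the surrogate functional decouples along the basis into the scalar problems
`x² - 2 h_γ x + w_γ |x|^{p_γ}`. Because `t_γ` minimizes such a problem and the penalty is convex,
`2 (h_γ - t_γ)` is a subgradient of the penalty at `t_γ`. Summing these subgradient inequalities
and using Parseval's identity for `Σ_γ (h_γ - t_γ) h'_γ = ⟪h - f_min, h'⟫` gives the quadratic lower
bound, which forces uniqueness. Minimality at `x = 0` gives `t_γ² ≤ 4 h_γ²`, hence `f_min ∈ H`.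
-/

open Set

theorem convexOn_abs_rpow {p : ℝ} (hp : 1 ≤ p) : ConvexOn ℝ univ fun x : ℝ => |x| ^ p := by
  have himage : (abs : ℝ → ℝ) '' univ = Ici 0 := by
    ext y
    simp only [image_univ, mem_range, mem_Ici]
    exact ⟨fun ⟨x, hx⟩ => hx ▸ abs_nonneg x, fun hy => ⟨y, abs_of_nonneg hy⟩⟩
  refine ConvexOn.comp (g := fun x : ℝ => x ^ p) ?_ convexOn_univ_norm ?_
  · rw [himage]; exact convexOn_rpow hp
  · rw [himage]; exact fun x hx y _ hxy => Real.rpow_le_rpow hx hxy (by linarith)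

theorem ConvexOn.add_two_mul_sub_mul_le {φ : ℝ → ℝ} (hφ : ConvexOn ℝ univ φ) {b t : ℝ}
    (hmin : ∀ x, t ^ 2 - 2 * b * t + φ t ≤ x ^ 2 - 2 * b * x + φ x) (x : ℝ) :
    φ t + 2 * (b - t) * x ≤ φ (t + x) := by
  -- Compare with the competitor `t + l x = (1 - l) t + l (t + x)` and let `l → 0`.
  have hstep : ∀ l : ℝ, 0 < l → l ≤ 1 → φ t + 2 * (b - t) * x ≤ φ (t + x) + l * x ^ 2 := by
    intro l hl0 hl1
    have hconv : φ (t + l * x) ≤ (1 - l) * φ t + l * φ (t + x) := by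
      have := hφ.2 (mem_univ t) (mem_univ (t + x)) (sub_nonneg.2 hl1) hl0.le (by ring)
      simpa [smul_eq_mul, show (1 - l) * t + l * (t + x) = t + l * x by ring] using this
    have := hmin (t + l * x)
    refine le_of_mul_le_mul_left ?_ hl0
    nlinarith
  refine le_of_forall_pos_le_add fun ε hε => ?_
  set l := min 1 (ε / (x ^ 2 + 1))
  have hlx : l * x ^ 2 ≤ ε := calc
    l * x ^ 2 ≤ ε / (x ^ 2 + 1) * (x ^ 2 + 1) :=
      mul_le_mul (min_le_right _ _) (by linarith) (sq_nonneg x) (by positivity)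
    _ = ε := by field_simp
  linarith [hstep l (lt_min one_pos (by positivity)) (min_le_left _ _)]

theorem sq_le_and_le_sq_of_minimizer {φ : ℝ → ℝ} (hφ : ∀ x, 0 ≤ φ x) (hφ0 : φ 0 = 0) {b t : ℝ}
    (hmin : ∀ x, t ^ 2 - 2 * b * t + φ t ≤ x ^ 2 - 2 * b * x + φ x) :
    t ^ 2 ≤ 4 * b ^ 2 ∧ φ t ≤ b ^ 2 := by
  have h0 := hmin 0
  simp only [hφ0] at h0
  constructor <;> nlinarith [hφ t, sq_nonneg (t - 2 * b), sq_nonneg (t - b)]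

theorem ENNReal.ofReal_add_tsum_ofReal_le {ι : Type*} {A B : ℝ} {u v : ι → ℝ} (hA : 0 ≤ A)
    (hu : ∀ i, 0 ≤ u i) (hv : ∀ i, 0 ≤ v i) (hus : Summable u)
    (h : Summable v → A + ∑' i, u i ≤ B + ∑' i, v i) :
    ENNReal.ofReal A + ∑' i, ENNReal.ofReal (u i) ≤
      ENNReal.ofReal B + ∑' i, ENNReal.ofReal (v i) := by
  by_cases hvtop : ∑' i, ENNReal.ofReal (v i) = ⊤
  · simp [hvtop]
  have hvs : Summable v :=
    (ENNReal.summable_toReal hvtop).congr fun i => ENNReal.toReal_ofReal (hv i)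
  rw [← ENNReal.ofReal_tsum_of_nonneg hu hus, ← ENNReal.ofReal_tsum_of_nonneg hv hvs,
    ← ENNReal.ofReal_add hA (tsum_nonneg hu)]
  exact (ENNReal.ofReal_le_ofReal (h hvs)).trans ENNReal.ofReal_add_le

theorem eq_of_add_ofReal_sq_norm_le {E : Type*} [NormedAddCommGroup E] {F : E → ℝ≥0∞} {x y : E}
    (hx : F x ≠ ⊤) (hle : F x + ENNReal.ofReal (‖y - x‖ ^ 2) ≤ F y) (hy : F y ≤ F x) : y = x := by
  have hzero : ENNReal.ofReal (‖y - x‖ ^ 2) ≤ 0 :=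
    ENNReal.le_of_add_le_add_left hx (by simpa using hle.trans hy)
  have hsq : ‖y - x‖ ^ 2 = 0 :=
    le_antisymm (ENNReal.ofReal_eq_zero.mp (nonpos_iff_eq_zero.mp hzero)) (sq_nonneg _)
  exact sub_eq_zero.mp (norm_eq_zero.mp (pow_eq_zero_iff two_ne_zero |>.mp hsq))

namespace HilbertBasis

variable {ι E : Type*} [NormedAddCommGroup E] [InnerProductSpace ℝ E] (e : HilbertBasis ι ℝ E)

theorem summable_inner_sq (x : E) : Summable fun i => ⟪x, e i⟫ ^ 2 :=
  (e.summable_inner_mul_inner x x).congr fun i => by rw [real_inner_comm (e i) x, sq]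

theorem exists_inner_eq_of_summable_sq {t : ι → ℝ} (ht : Summable fun i => t i ^ 2) :
    ∃ f : E, ∀ i, ⟪f, e i⟫ = t i := by
  have hmem : Memℓp t 2 := memℓp_gen <| ht.congr fun i => by
    rw [ENNReal.toReal_ofNat, Real.norm_eq_abs, Real.rpow_two, sq_abs]
  refine ⟨e.repr.symm ⟨t, hmem⟩, fun i => ?_⟩
  rw [real_inner_comm, ← e.repr_apply_apply, LinearIsometryEquiv.apply_symm_apply]

theorem tsum_add_two_inner_le {φ : ι → ℝ → ℝ} (hφ : ∀ i, ConvexOn ℝ univ (φ i)) {h f : E}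
    (hmin : ∀ i x, ⟪f, e i⟫ ^ 2 - 2 * ⟪h, e i⟫ * ⟪f, e i⟫ + φ i ⟪f, e i⟫ ≤
      x ^ 2 - 2 * ⟪h, e i⟫ * x + φ i x)
    (u : E) (hf : Summable fun i => φ i ⟪f, e i⟫) (hfu : Summable fun i => φ i ⟪f + u, e i⟫) :
    ∑' i, φ i ⟪f, e i⟫ + 2 * ⟪h - f, u⟫ ≤ ∑' i, φ i ⟪f + u, e i⟫ := by
  have hcross : HasSum (fun i => 2 * (⟪h, e i⟫ - ⟪f, e i⟫) * ⟪u, e i⟫) (2 * ⟪h - f, u⟫) := by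
    refine ((e.hasSum_inner_mul_inner (h - f) u).mul_left 2).congr_fun fun i => ?_
    rw [inner_sub_left, real_inner_comm (e i) u]
    ring
  rw [← (hf.hasSum.add hcross).tsum_eq]
  refine Summable.tsum_le_tsum (fun i => ?_) (hf.add hcross.summable) hfu
  rw [inner_add_left]
  exact (hφ i).add_two_mul_sub_mul_le (hmin i) _

end HilbertBasis

section Surrogate

variable {H H' : Type*} [NormedAddCommGroup H] [InnerProductSpace ℝ H]
  [NormedAddCommGroup H'] [InnerProductSpace ℝ H']

def surrogateQuadratic (K : H →L[ℝ] H') (g : H') (a f : H) : ℝ :=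
  ‖K f - g‖ ^ 2 + (‖f - a‖ ^ 2 - ‖K (f - a)‖ ^ 2)

variable {K : H →L[ℝ] H'} {g : H'} {a : H}

theorem sq_norm_sub_sq_norm_apply_nonneg (hK : ‖K‖ ≤ 1) (x : H) : 0 ≤ ‖x‖ ^ 2 - ‖K x‖ ^ 2 := by
  have hKx : ‖K x‖ ≤ ‖x‖ := by simpa using K.le_of_opNorm_le hK x
  linarith [pow_le_pow_left₀ (norm_nonneg _) hKx 2]

theorem surrogateQuadratic_nonneg (hK : ‖K‖ ≤ 1) (f : H) : 0 ≤ surrogateQuadratic K g a f :=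
  add_nonneg (sq_nonneg _) (sq_norm_sub_sq_norm_apply_nonneg hK (f - a))

theorem surrogateQuadratic_add [CompleteSpace H] [CompleteSpace H'] (f u : H) :
    surrogateQuadratic K g a (f + u) = surrogateQuadratic K g a f + ‖u‖ ^ 2 -
      2 * ⟪a + ContinuousLinearMap.adjoint K (g - K a) - f, u⟫ := by
  have e1 : K (f + u) - g = (K f - g) + K u := by rw [map_add]; abel
  have e2 : f + u - a = (f - a) + u := by abel
  rw [surrogateQuadratic, surrogateQuadratic, e1, e2, K.map_add (f - a), norm_add_sq_real,
    norm_add_sq_real, norm_add_sq_real]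
  simp only [inner_sub_left, inner_add_left, ContinuousLinearMap.adjoint_inner_left, map_sub]
  ring

variable {ι : Type*}

/-- `Φ^sur(·; a)` for the separable penalty `Σ_i φ_i(⟪f, e_i⟫)`. -/
noncomputable def surrogate (e : HilbertBasis ι ℝ H) (K : H →L[ℝ] H') (g : H') (a : H)
    (φ : ι → ℝ → ℝ) (f : H) : ℝ≥0∞ :=
  ENNReal.ofReal (surrogateQuadratic K g a f) + ∑' i, ENNReal.ofReal (φ i ⟪f, e i⟫)

variable (e : HilbertBasis ι ℝ H) {φ : ι → ℝ → ℝ}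

theorem surrogate_ne_top (hφ : ∀ i x, 0 ≤ φ i x) {f : H} (hf : Summable fun i => φ i ⟪f, e i⟫) :
    surrogate e K g a φ f ≠ ⊤ := by
  rw [surrogate, ← ENNReal.ofReal_tsum_of_nonneg (fun i => hφ i _) hf]
  exact ENNReal.add_ne_top.mpr ⟨ENNReal.ofReal_ne_top, ENNReal.ofReal_ne_top⟩

theorem surrogate_add_le [CompleteSpace H] [CompleteSpace H'] (hK : ‖K‖ ≤ 1)
    (hφ : ∀ i, ConvexOn ℝ univ (φ i)) (hφnn : ∀ i x, 0 ≤ φ i x) {f : H}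
    (hmin : ∀ i x,
      ⟪f, e i⟫ ^ 2 - 2 * ⟪a + ContinuousLinearMap.adjoint K (g - K a), e i⟫ * ⟪f, e i⟫ +
        φ i ⟪f, e i⟫ ≤ x ^ 2 - 2 * ⟪a + ContinuousLinearMap.adjoint K (g - K a), e i⟫ * x + φ i x)
    (hf : Summable fun i => φ i ⟪f, e i⟫) (u : H) :
    surrogate e K g a φ f + ENNReal.ofReal (‖u‖ ^ 2) ≤ surrogate e K g a φ (f + u) := by
  rw [surrogate, surrogate, add_right_comm,
    ← ENNReal.ofReal_add (surrogateQuadratic_nonneg hK f) (sq_nonneg _)]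
  refine ENNReal.ofReal_add_tsum_ofReal_le (add_nonneg (surrogateQuadratic_nonneg hK f)
    (sq_nonneg _)) (fun i => hφnn i _) (fun i => hφnn i _) hf fun hfu => ?_
  linarith [surrogateQuadratic_add (K := K) (g := g) (a := a) f u,
    e.tsum_add_two_inner_le hφ hmin u hf hfu]

end Surrogate

theorem stmt_7_general
    {H H' : Type*} [NormedAddCommGroup H] [InnerProductSpace ℝ H] [CompleteSpace H]
    [NormedAddCommGroup H'] [InnerProductSpace ℝ H'] [CompleteSpace H']
    {Γ : Type*}
    (e : HilbertBasis Γ ℝ H)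
    (K : H →L[ℝ] H') (hK : ‖K‖ < 1)
    (w : Γ → ℝ) (c : ℝ) (hc : 0 < c) (hw : ∀ γ, c ≤ w γ)
    (p : Γ → ℝ) (hp : ∀ γ, 1 ≤ p γ ∧ p γ ≤ 2)
    (g : H') (a : H)
    (Φ : H → ℝ≥0∞)
    (hΦ : ∀ f, Φ f = ENNReal.ofReal (‖K f - g‖ ^ 2) +
      ∑' γ, ENNReal.ofReal (w γ * |⟪f, e γ⟫| ^ (p γ)))
    (Φsur : H → H → ℝ≥0∞)
    (hΦsur : ∀ f a', Φsur f a' = Φ f + ENNReal.ofReal (‖f - a'‖ ^ 2 - ‖K (f - a')‖ ^ 2))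
    (h : H) (hh : h = a + (ContinuousLinearMap.adjoint K) (g - K a))
    (t : Γ → ℝ)
    (ht : ∀ (γ : Γ) (x : ℝ),
      (t γ) ^ 2 - 2 * ⟪h, e γ⟫ * t γ + w γ * |t γ| ^ (p γ) ≤
        x ^ 2 - 2 * ⟪h, e γ⟫ * x + w γ * |x| ^ (p γ)) :
    Summable (fun γ => (t γ) ^ 2) ∧
    ∃ fmin : H, (∀ γ, ⟪fmin, e γ⟫ = t γ) ∧
      (∀ h' : H, Φsur fmin a + ENNReal.ofReal (‖h'‖ ^ 2) ≤ Φsur (fmin + h') a) ∧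
      (∀ f : H, (∀ f' : H, Φsur f a ≤ Φsur f' a) → f = fmin) := by
  subst hh
  have hw0 : ∀ γ, 0 ≤ w γ := fun γ => hc.le.trans (hw γ)
  set φ : Γ → ℝ → ℝ := fun γ x => w γ * |x| ^ p γ
  have hφ : ∀ γ, ConvexOn ℝ univ (φ γ) := fun γ => (convexOn_abs_rpow (hp γ).1).smul (hw0 γ)
  have hφnn : ∀ γ x, 0 ≤ φ γ x := fun γ x => mul_nonneg (hw0 γ) (by positivity)
  have hbound := fun γ => sq_le_and_le_sq_of_minimizer (hφnn γ)
    (by simp [φ, Real.zero_rpow (by linarith [(hp γ).1] : p γ ≠ 0)]) (ht γ)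
  have hts : Summable fun γ => t γ ^ 2 := .of_nonneg_of_le (fun γ => sq_nonneg _)
    (fun γ => (hbound γ).1) ((e.summable_inner_sq _).mul_left 4)
  obtain ⟨fmin, hfmin⟩ := e.exists_inner_eq_of_summable_sq hts
  have hφs : Summable fun γ => φ γ ⟪fmin, e γ⟫ := .of_nonneg_of_le (fun γ => hφnn γ _)
    (fun γ => hfmin γ ▸ (hbound γ).2) (e.summable_inner_sq _)
  have hform : ∀ f, Φsur f a = surrogate e K g a φ f := fun f => by
    rw [hΦsur, hΦ, surrogate, surrogateQuadratic,
      ENNReal.ofReal_add (sq_nonneg _) (sq_norm_sub_sq_norm_apply_nonneg hK.le _), add_right_comm]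
  have hle : ∀ h' : H, Φsur fmin a + ENNReal.ofReal (‖h'‖ ^ 2) ≤ Φsur (fmin + h') a := fun h' => by
    rw [hform, hform]
    exact surrogate_add_le e hK.le hφ hφnn (by simpa only [hfmin] using ht) hφs h'
  refine ⟨hts, fmin, hfmin, hle, fun f hf => ?_⟩
  refine eq_of_add_ofReal_sq_norm_le (F := (Φsur · a)) ?_ (by simpa using hle (f - fmin)) (hf fmin)
  rw [hform]
  exact surrogate_ne_top e hφnn hφs

/-- The surrogate functional `Φ^sur(·; a)` has `f_min = Σ_γ S_{w_γ,p_γ}(h_γ) e_γ` (with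
`h = a + K*(g − Ka)`) as its unique minimizer, with the quadratic lower bound
`Φ^sur(f_min + h'; a) ≥ Φ^sur(f_min; a) + ‖h'‖²`. -/
theorem stmt_7
    {H H' : Type*} [NormedAddCommGroup H] [InnerProductSpace ℝ H] [CompleteSpace H]
    [NormedAddCommGroup H'] [InnerProductSpace ℝ H'] [CompleteSpace H']
    {Γ : Type*} [Countable Γ]
    (e : HilbertBasis Γ ℝ H)
    (K : H →L[ℝ] H') (hK : ‖K‖ < 1)
    (w : Γ → ℝ) (c : ℝ) (hc : 0 < c) (hw : ∀ γ, c ≤ w γ)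
    (p : Γ → ℝ) (hp : ∀ γ, 1 ≤ p γ ∧ p γ ≤ 2)
    (g : H') (a : H)
    (Φ : H → ℝ≥0∞)
    (hΦ : ∀ f, Φ f = ENNReal.ofReal (‖K f - g‖ ^ 2) +
      ∑' γ, ENNReal.ofReal (w γ * |⟪f, e γ⟫| ^ (p γ)))
    (Φsur : H → H → ℝ≥0∞)
    (hΦsur : ∀ f a', Φsur f a' = Φ f + ENNReal.ofReal (‖f - a'‖ ^ 2 - ‖K (f - a')‖ ^ 2))
    (h : H) (hh : h = a + (ContinuousLinearMap.adjoint K) (g - K a))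
    (t : Γ → ℝ)
    (ht : ∀ (γ : Γ) (x : ℝ),
      (t γ) ^ 2 - 2 * ⟪h, e γ⟫ * t γ + w γ * |t γ| ^ (p γ) ≤
        x ^ 2 - 2 * ⟪h, e γ⟫ * x + w γ * |x| ^ (p γ)) :
    Summable (fun γ => (t γ) ^ 2) ∧
    ∃ fmin : H, (∀ γ, ⟪fmin, e γ⟫ = t γ) ∧
      (∀ h' : H, Φsur fmin a + ENNReal.ofReal (‖h'‖ ^ 2) ≤ Φsur (fmin + h') a) ∧
      (∀ f : H, (∀ f' : H, Φsur f a ≤ Φsur f' a) → f = fmin) :=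
  stmt_7_general e K hK w c hc hw p hp g a Φ hΦ Φsur hΦsur h hh t ht
end

section
/- Let g ∈ H'. If f* ∈ H satisfies Φ^sur(f*; f*) ≤ Φ^sur(f; f*) for all f ∈ H (i.e. f* is a minimizer of the surrogate functional anchored at f* itself; equivalently, f* is a fixed point of the map T(f) = S_{W,P}(f + K*(g − Kf))), then f* is a minimizer of Φ: Φ(f*) ≤ Φ(f) for all f ∈ H. -/
/-!
`Φ` is convex, and `Φsur · fstar = Φ + Q (· - fstar)` with `Q h = ‖h‖² - ‖K h‖²` quadratic.
Minimality of `Φsur · fstar` at `fstar`, tested at `fstar + t (f - fstar)`, gives with convexity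
`Φ fstar ≤ (1 - t) Φ fstar + t Φ f + t² Q (f - fstar)`; dividing by `t` and letting `t → 0`
yields `Φ fstar ≤ Φ f`. Since `Φ` takes values in `ℝ≥0∞`, which is only an `ℝ≥0`-module,
convexity is expressed as `ConvexOn ℝ≥0`.
-/

open scoped RealInnerProductSpace ENNReal NNReal
open Set Filter Topology

section Convexity

variable {E : Type*} [AddCommGroup E] [Module ℝ E] {s : Set E}

theorem ConvexOn.rpow {f : E → ℝ} (hf : ConvexOn ℝ s f) (hf₀ : ∀ x ∈ s, 0 ≤ f x) {p : ℝ}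
    (hp : 1 ≤ p) : ConvexOn ℝ s fun x => f x ^ p := by
  refine ⟨hf.1, fun x hx y hy a b ha hb hab => ?_⟩
  calc f (a • x + b • y) ^ p ≤ (a • f x + b • f y) ^ p :=
        Real.rpow_le_rpow (hf₀ _ (hf.1 hx hy ha hb hab)) (hf.2 hx hy ha hb hab) (by linarith)
    _ ≤ a • f x ^ p + b • f y ^ p :=
        (convexOn_rpow hp).2 (hf₀ x hx) (hf₀ y hy) ha hb hab

theorem ConvexOn.ennreal_ofReal {f : E → ℝ} (hf : ConvexOn ℝ s f) :
    ConvexOn ℝ≥0 s fun x => ENNReal.ofReal (f x) := by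
  refine ⟨fun x hx y hy a b _ _ hab => hf.1 hx hy a.2 b.2 (by exact_mod_cast hab),
    fun x hx y hy a b _ _ hab => ?_⟩
  calc ENNReal.ofReal (f (a • x + b • y))
      ≤ ENNReal.ofReal ((a : ℝ) * f x + (b : ℝ) * f y) :=
        ENNReal.ofReal_le_ofReal (hf.2 hx hy a.2 b.2 (by exact_mod_cast hab))
    _ ≤ ENNReal.ofReal ((a : ℝ) * f x) + ENNReal.ofReal ((b : ℝ) * f y) := ENNReal.ofReal_add_le
    _ = a • ENNReal.ofReal (f x) + b • ENNReal.ofReal (f y) := by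
        simp only [ENNReal.ofReal_mul (NNReal.coe_nonneg _), ENNReal.ofReal_coe_nnreal,
          ENNReal.smul_def, smul_eq_mul]

theorem convexOn_norm_sub_sq {F : Type*} [NormedAddCommGroup F] [NormedSpace ℝ F]
    (K : E →ₗ[ℝ] F) (g : F) : ConvexOn ℝ univ fun x => ‖K x - g‖ ^ 2 := by
  have h := (convexOn_univ_norm.pow (fun _ _ => norm_nonneg _) 2).comp_affineMap
    (K.toAffineMap - AffineMap.const ℝ E g)
  rw [preimage_univ] at h
  exact h

theorem convexOn_mul_abs_inner_rpow {H : Type*} [NormedAddCommGroup H] [InnerProductSpace ℝ H]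
    (v : H) {w p : ℝ} (hw : 0 ≤ w) (hp : 1 ≤ p) :
    ConvexOn ℝ univ fun x => w * |⟪x, v⟫| ^ p := by
  have habs : ConvexOn ℝ univ fun x : H => |⟪x, v⟫| := by
    have h := (convexOn_univ_norm (E := ℝ)).comp_linearMap ((innerₗ H).flip v)
    rw [preimage_univ] at h
    exact h
  exact (habs.rpow (fun _ _ => abs_nonneg _) hp).smul hw

end Convexity

theorem ConvexOn.ennreal_tsum {E ι : Type*} [AddCommMonoid E] [SMul ℝ≥0 E] {s : Set E}
    (hs : Convex ℝ≥0 s) {f : ι → E → ℝ≥0∞} (hf : ∀ i, ConvexOn ℝ≥0 s (f i)) :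
    ConvexOn ℝ≥0 s fun x => ∑' i, f i x := by
  refine ⟨hs, fun x hx y hy a b ha hb hab => ?_⟩
  calc ∑' i, f i (a • x + b • y) ≤ ∑' i, (a • f i x + b • f i y) :=
        ENNReal.tsum_le_tsum fun i => (hf i).2 hx hy ha hb hab
    _ = a • ∑' i, f i x + b • ∑' i, f i y := by
        simp only [ENNReal.smul_def, smul_eq_mul, ENNReal.tsum_add, ENNReal.tsum_mul_left]

theorem ConvexOn.le_of_forall_le_add_sq_mul {E : Type*} [AddCommMonoid E] [Module ℝ≥0 E]
    {s : Set E} {F : E → ℝ≥0∞} (hF : ConvexOn ℝ≥0 s F) {x y : E} (hx : x ∈ s) (hy : y ∈ s)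
    {C : ℝ≥0∞} (hC : C ≠ ⊤)
    (h : ∀ t : ℝ≥0, 0 < t → t ≤ 1 → F x ≤ F ((1 - t) • x + t • y) + t ^ 2 * C) :
    F x ≤ F y := by
  rcases eq_top_or_lt_top (F y) with hFy | hFy
  · exact hFy ▸ le_top
  have hFx : F x ≠ ⊤ := by
    refine ne_top_of_le_ne_top ?_ (by simpa using h 1 one_pos le_rfl)
    exact ENNReal.add_ne_top.2 ⟨hFy.ne, hC⟩
  have hlin : ∀ t : ℝ≥0, 0 < t → t ≤ 1 → F x ≤ F y + t * C := by
    intro t ht₀ ht₁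
    have hsplit : F x = (1 - t : ℝ≥0) * F x + t * F x := by
      rw [← add_mul, ← ENNReal.coe_add, tsub_add_cancel_of_le ht₁, ENNReal.coe_one, one_mul]
    have hineq : (1 - t : ℝ≥0) * F x + t * F x ≤ (1 - t : ℝ≥0) * F x + t * (F y + t * C) := by
      calc _ = F x := hsplit.symm
        _ ≤ F ((1 - t) • x + t • y) + t ^ 2 * C := h t ht₀ ht₁
        _ ≤ (1 - t) • F x + t • F y + t ^ 2 * C := by
            gcongr; exact hF.2 hx hy zero_le zero_le (tsub_add_cancel_of_le ht₁)
        _ = _ := by simp only [ENNReal.smul_def, smul_eq_mul]; ring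
    have hcancel := ENNReal.le_of_add_le_add_left (ENNReal.mul_ne_top ENNReal.coe_ne_top hFx) hineq
    exact (ENNReal.mul_le_mul_iff_right (by exact_mod_cast ht₀.ne') ENNReal.coe_ne_top).1 hcancel
  have hlim : Tendsto (fun t : ℝ≥0 => F y + t * C) (𝓝[>] 0) (𝓝 (F y)) := by
    have hmul : Tendsto (fun t : ℝ≥0 => (t : ℝ≥0∞) * C) (𝓝 0) (𝓝 (((0 : ℝ≥0) : ℝ≥0∞) * C)) :=
      ENNReal.Tendsto.mul_const (ENNReal.continuous_coe.tendsto 0) (Or.inr hC)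
    simpa using (tendsto_const_nhds.add hmul).mono_left nhdsWithin_le_nhds
  refine ge_of_tendsto hlim ?_
  filter_upwards [Ioc_mem_nhdsGT one_pos] with t ht using hlin t ht.1 ht.2

theorem stmt_8_general
    {H H' : Type*} [NormedAddCommGroup H] [InnerProductSpace ℝ H]
    [NormedAddCommGroup H'] [InnerProductSpace ℝ H']
    {Γ : Type*}
    (e : HilbertBasis Γ ℝ H)
    (K : H →L[ℝ] H')
    (w : Γ → ℝ) (c : ℝ) (hc : 0 < c) (hw : ∀ γ, c ≤ w γ)
    (p : Γ → ℝ) (hp : ∀ γ, 1 ≤ p γ ∧ p γ ≤ 2)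
    (g : H')
    (Φ : H → ℝ≥0∞)
    (hΦ : ∀ f, Φ f = ENNReal.ofReal (‖K f - g‖ ^ 2) +
      ∑' γ, ENNReal.ofReal (w γ * |⟪f, e γ⟫| ^ (p γ)))
    (Φsur : H → H → ℝ≥0∞)
    (hΦsur : ∀ f a', Φsur f a' = Φ f + ENNReal.ofReal (‖f - a'‖ ^ 2 - ‖K (f - a')‖ ^ 2))
    (fstar : H)
    (hfix : ∀ f : H, Φsur fstar fstar ≤ Φsur f fstar) :
    ∀ f : H, Φ fstar ≤ Φ f := by
  have hconv : ConvexOn ℝ≥0 univ Φ := by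
    rw [funext hΦ]
    exact (convexOn_norm_sub_sq (K : H →ₗ[ℝ] H') g).ennreal_ofReal.add
      (ConvexOn.ennreal_tsum convex_univ fun γ =>
        (convexOn_mul_abs_inner_rpow (e γ) (hc.le.trans (hw γ)) (hp γ).1).ennreal_ofReal)
  intro f
  refine hconv.le_of_forall_le_add_sq_mul (mem_univ _) (mem_univ _)
    (ENNReal.ofReal_ne_top (r := ‖f - fstar‖ ^ 2 - ‖K (f - fstar)‖ ^ 2)) fun t _ ht₁ => ?_
  have hstep : (1 - t) • fstar + t • f - fstar = (t : ℝ) • (f - fstar) := by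
    rw [NNReal.smul_def, NNReal.smul_def, NNReal.coe_sub ht₁]; module
  have hscale : ‖(t : ℝ) • (f - fstar)‖ ^ 2 - ‖K ((t : ℝ) • (f - fstar))‖ ^ 2 =
      (t : ℝ) ^ 2 * (‖f - fstar‖ ^ 2 - ‖K (f - fstar)‖ ^ 2) := by
    rw [map_smul, norm_smul, norm_smul, NNReal.norm_eq]; ring
  have hmin := hfix ((1 - t) • fstar + t • f)
  rw [hΦsur, hΦsur, hstep, hscale, ENNReal.ofReal_mul (by positivity)] at hmin
  simpa using hmin

/-- If `f*` minimizes the surrogate functional anchored at `f*` itself, then `f*` is a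
minimizer of `Φ`. -/
theorem stmt_8
    {H H' : Type*} [NormedAddCommGroup H] [InnerProductSpace ℝ H] [CompleteSpace H]
    [NormedAddCommGroup H'] [InnerProductSpace ℝ H'] [CompleteSpace H']
    {Γ : Type*} [Countable Γ]
    (e : HilbertBasis Γ ℝ H)
    (K : H →L[ℝ] H') (hK : ‖K‖ < 1)
    (w : Γ → ℝ) (c : ℝ) (hc : 0 < c) (hw : ∀ γ, c ≤ w γ)
    (p : Γ → ℝ) (hp : ∀ γ, 1 ≤ p γ ∧ p γ ≤ 2)
    (g : H')
    (Φ : H → ℝ≥0∞)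
    (hΦ : ∀ f, Φ f = ENNReal.ofReal (‖K f - g‖ ^ 2) +
      ∑' γ, ENNReal.ofReal (w γ * |⟪f, e γ⟫| ^ (p γ)))
    (Φsur : H → H → ℝ≥0∞)
    (hΦsur : ∀ f a', Φsur f a' = Φ f + ENNReal.ofReal (‖f - a'‖ ^ 2 - ‖K (f - a')‖ ^ 2))
    (fstar : H)
    (hfix : ∀ f : H, Φsur fstar fstar ≤ Φsur f fstar) :
    ∀ f : H, Φ fstar ≤ Φ f :=
  stmt_8_general e K w c hc hw p hp g Φ hΦ Φsur hΦsur fstar hfix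
end

section
/- For every v ∈ H the family (S_{w_γ,p_γ}(v_γ))_{γ∈Γ} is square-summable, so S_{W,P}(v) = Σ_γ S_{w_γ,p_γ}(v_γ) e_γ is a well-defined element of H; and the map S_{W,P} : H → H is nonexpansive: for all v, v' ∈ H, ‖S_{W,P}(v) − S_{W,P}(v')‖ ≤ ‖v − v'‖. -/
/-!
Each `S_{w,p}` is the proximal map of the convex function `w |·| ^ p`: the objective
`x² - 2bx + w |x| ^ p` is `1`-strongly convex, so comparing the objectives at two minimizers
gives `|S b - S b'|² ≤ (b - b')(S b - S b')`, i.e. `S` is nonexpansive; moreover `S 0 = 0`.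
A family of nonexpansive scalar maps fixing `0` acts coordinatewise on `ℓ²` and hence, through
the Hilbert basis, nonexpansively on `H`; Parseval then gives the square-summability.
-/

open scoped RealInnerProductSpace
open Set Filter Topology

lemma convexOn_mul_abs_rpow {w q : ℝ} (hw : 0 ≤ w) (hq : 1 ≤ q) :
    ConvexOn ℝ univ fun x : ℝ => w * |x| ^ q := by
  have himage : (fun x : ℝ => |x|) '' univ = Ici 0 := by
    ext y
    exact ⟨by rintro ⟨x, -, rfl⟩; exact abs_nonneg x, fun hy => ⟨y, trivial, abs_of_nonneg hy⟩⟩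
  have hrpow : ConvexOn ℝ ((fun x : ℝ => |x|) '' univ) fun y : ℝ => y ^ q :=
    himage ▸ convexOn_rpow hq
  have hmono : MonotoneOn (fun y : ℝ => y ^ q) ((fun x : ℝ => |x|) '' univ) :=
    himage ▸ fun a ha b _ hab => Real.rpow_le_rpow ha hab (by linarith)
  exact (hrpow.comp (convexOn_univ_norm (E := ℝ)) hmono).smul hw

/-- For `φ = c' |·| ^ p` its minimizer in `x` is `S_{c',p}(b)`. -/
def proxObjective (φ : ℝ → ℝ) (b x : ℝ) : ℝ := x ^ 2 - 2 * b * x + φ x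

section Prox

variable {φ : ℝ → ℝ} {b σ : ℝ}

/-- The objective is `1`-strongly convex when `φ` is convex. -/
lemma proxObjective_add_sq_le (hφ : ConvexOn ℝ univ φ)
    (hσ : ∀ x, proxObjective φ b σ ≤ proxObjective φ b x) (y : ℝ) :
    proxObjective φ b σ + (σ - y) ^ 2 ≤ proxObjective φ b y := by
  have hsegment : ∀ t ∈ Ioo (0 : ℝ) 1,
      proxObjective φ b σ + (1 - t) * (σ - y) ^ 2 ≤ proxObjective φ b y := by
    rintro t ⟨ht0, ht1⟩
    have hφt : φ ((1 - t) * σ + t * y) ≤ (1 - t) * φ σ + t * φ y :=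
      hφ.2 (mem_univ σ) (mem_univ y) (by linarith) ht0.le (by ring)
    have hmin := hσ ((1 - t) * σ + t * y)
    unfold proxObjective at hmin ⊢
    nlinarith
  have hlim : Tendsto (fun t : ℝ => proxObjective φ b σ + (1 - t) * (σ - y) ^ 2) (𝓝[>] 0)
      (𝓝 (proxObjective φ b σ + (σ - y) ^ 2)) := by
    have hcont : Continuous fun t : ℝ => proxObjective φ b σ + (1 - t) * (σ - y) ^ 2 := by
      fun_prop
    simpa using tendsto_nhdsWithin_of_tendsto_nhds (hcont.tendsto 0)
  exact le_of_tendsto hlim (mem_of_superset (Ioo_mem_nhdsGT one_pos) hsegment)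

lemma abs_sub_le_of_forall_proxObjective_le (hφ : ConvexOn ℝ univ φ) {b' σ' : ℝ}
    (hσ : ∀ x, proxObjective φ b σ ≤ proxObjective φ b x)
    (hσ' : ∀ x, proxObjective φ b' σ' ≤ proxObjective φ b' x) :
    |σ - σ'| ≤ |b - b'| := by
  have h := proxObjective_add_sq_le hφ hσ σ'
  have h' := proxObjective_add_sq_le hφ hσ' σ
  unfold proxObjective at h h'
  exact sq_le_sq.mp (by nlinarith [sq_nonneg (σ - σ' - (b - b'))])

lemma eq_zero_of_forall_proxObjective_zero_le (hφ : ∀ x, 0 ≤ φ x) (hφ0 : φ 0 = 0)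
    (hσ : ∀ x, proxObjective φ 0 σ ≤ proxObjective φ 0 x) : σ = 0 := by
  have h := hσ 0
  have hsq : σ ^ 2 ≤ 0 := by
    norm_num [proxObjective, hφ0] at h
    linarith [hφ σ]
  exact pow_eq_zero_iff two_ne_zero |>.mp (le_antisymm hsq (sq_nonneg σ))

end Prox

theorem HilbertBasis.exists_nonexpansive_repr_apply_eq {ι 𝕜 E : Type*} [RCLike 𝕜]
    [NormedAddCommGroup E] [InnerProductSpace 𝕜 E] (e : HilbertBasis ι 𝕜 E) (f : ι → 𝕜 → 𝕜)
    (hf0 : ∀ i, f i 0 = 0) (hf : ∀ i a b, ‖f i a - f i b‖ ≤ ‖a - b‖) :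
    ∃ T : E → E, (∀ v i, e.repr (T v) i = f i (e.repr v i)) ∧
      ∀ v v', ‖T v - T v'‖ ≤ ‖v - v'‖ := by
  have hmem (v : E) : Memℓp (fun i => f i (e.repr v i)) 2 :=
    (lp.memℓp (e.repr v)).mono' fun i => by simpa [hf0] using hf i (e.repr v i) 0
  let F : E → lp (fun _ : ι => 𝕜) 2 := fun v => ⟨_, hmem v⟩
  refine ⟨fun v => e.repr.symm (F v), fun v i => by simp [F], fun v v' => ?_⟩
  calc ‖e.repr.symm (F v) - e.repr.symm (F v')‖ = ‖F v - F v'‖ := by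
        rw [← map_sub, LinearIsometryEquiv.norm_map]
    _ ≤ ‖e.repr v - e.repr v'‖ := lp.norm_mono two_ne_zero fun i => hf i _ _
    _ = ‖v - v'‖ := by rw [← map_sub, LinearIsometryEquiv.norm_map]

theorem stmt_9_general
    {H : Type*} [NormedAddCommGroup H] [InnerProductSpace ℝ H]
    {Γ : Type*}
    (e : HilbertBasis Γ ℝ H)
    (w : Γ → ℝ) (c : ℝ) (hc : 0 < c) (hw : ∀ γ, c ≤ w γ)
    (p : Γ → ℝ) (hp : ∀ γ, 1 ≤ p γ ∧ p γ ≤ 2)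
    (S : Γ → ℝ → ℝ)
    (hS : ∀ (γ : Γ) (b x : ℝ),
      (S γ b) ^ 2 - 2 * b * S γ b + w γ * |S γ b| ^ (p γ) ≤
        x ^ 2 - 2 * b * x + w γ * |x| ^ (p γ)) :
    (∀ v : H, Summable (fun γ => (S γ ⟪v, e γ⟫) ^ 2)) ∧
    ∃ SWP : H → H,
      (∀ (v : H) (γ : Γ), ⟪SWP v, e γ⟫ = S γ ⟪v, e γ⟫) ∧
      ∀ v v' : H, ‖SWP v - SWP v'‖ ≤ ‖v - v'‖ := by
  have hw0 (γ : Γ) : 0 ≤ w γ := hc.le.trans (hw γ)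
  have hS0 (γ : Γ) : S γ 0 = 0 :=
    eq_zero_of_forall_proxObjective_zero_le
      (fun x => mul_nonneg (hw0 γ) (Real.rpow_nonneg (abs_nonneg x) _))
      (by simp [Real.zero_rpow (by linarith [(hp γ).1] : p γ ≠ 0)]) (hS γ 0)
  have hSlip (γ : Γ) (a b : ℝ) : ‖S γ a - S γ b‖ ≤ ‖a - b‖ :=
    abs_sub_le_of_forall_proxObjective_le (convexOn_mul_abs_rpow (hw0 γ) (hp γ).1)
      (hS γ a) (hS γ b)
  obtain ⟨T, hT, hTlip⟩ := e.exists_nonexpansive_repr_apply_eq S hS0 hSlip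
  have hTinner (v : H) (γ : Γ) : ⟪T v, e γ⟫ = S γ ⟪v, e γ⟫ := by
    simpa only [e.repr_apply_apply, real_inner_comm] using hT v γ
  refine ⟨fun v => ?_, T, hTinner, hTlip⟩
  simpa only [← hTinner, real_inner_comm, sq] using e.summable_inner_mul_inner (T v) (T v)

/-- The thresholding map `S_{W,P}` is well defined (the family of thresholded coefficients
is square-summable) and nonexpansive. -/
theorem stmt_9
    {H : Type*} [NormedAddCommGroup H] [InnerProductSpace ℝ H] [CompleteSpace H]
    {Γ : Type*} [Countable Γ]
    (e : HilbertBasis Γ ℝ H)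
    (w : Γ → ℝ) (c : ℝ) (hc : 0 < c) (hw : ∀ γ, c ≤ w γ)
    (p : Γ → ℝ) (hp : ∀ γ, 1 ≤ p γ ∧ p γ ≤ 2)
    (S : Γ → ℝ → ℝ)
    (hS : ∀ (γ : Γ) (b x : ℝ),
      (S γ b) ^ 2 - 2 * b * S γ b + w γ * |S γ b| ^ (p γ) ≤
        x ^ 2 - 2 * b * x + w γ * |x| ^ (p γ)) :
    (∀ v : H, Summable (fun γ => (S γ ⟪v, e γ⟫) ^ 2)) ∧
    ∃ SWP : H → H,
      (∀ (v : H) (γ : Γ), ⟪SWP v, e γ⟫ = S γ ⟪v, e γ⟫) ∧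
      ∀ v v' : H, ‖SWP v - SWP v'‖ ≤ ‖v - v'‖ :=
  stmt_9_general e w c hc hw p hp S hS
end

section
/- Let g ∈ H', let f^0 ∈ H satisfy Φ(f^0) < ∞, and define the iterates f^{n+1} = T(f^n) where T(f) = S_{W,P}(f + K*(g − Kf)). Then Σ_{n=0}^∞ ‖f^{n+1} − f^n‖² < ∞; in particular ‖f^{n+1} − f^n‖ → 0 as n → ∞. -/
open scoped RealInnerProductSpace ENNReal

/-- If `Φ(f⁰) < ∞`, then along the iterates `f^{n+1} = T(f^n)` one has
`Σ_n ‖f^{n+1} − f^n‖² < ∞`; in particular `‖f^{n+1} − f^n‖ → 0`. -/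
theorem stmt_12
    {H H' : Type*} [NormedAddCommGroup H] [InnerProductSpace ℝ H] [CompleteSpace H]
    [NormedAddCommGroup H'] [InnerProductSpace ℝ H'] [CompleteSpace H']
    {Γ : Type*} [Countable Γ]
    (e : HilbertBasis Γ ℝ H)
    (K : H →L[ℝ] H') (hK : ‖K‖ < 1)
    (w : Γ → ℝ) (c : ℝ) (hc : 0 < c) (hw : ∀ γ, c ≤ w γ)
    (p : Γ → ℝ) (hp : ∀ γ, 1 ≤ p γ ∧ p γ ≤ 2)
    (g : H')
    (Φ : H → ℝ≥0∞)
    (hΦ : ∀ f, Φ f = ENNReal.ofReal (‖K f - g‖ ^ 2) +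
      ∑' γ, ENNReal.ofReal (w γ * |⟪f, e γ⟫| ^ (p γ)))
    (S : Γ → ℝ → ℝ)
    (hS : ∀ (γ : Γ) (b x : ℝ),
      (S γ b) ^ 2 - 2 * b * S γ b + w γ * |S γ b| ^ (p γ) ≤
        x ^ 2 - 2 * b * x + w γ * |x| ^ (p γ))
    (T : H → H)
    (hT : ∀ (f : H) (γ : Γ),
      ⟪T f, e γ⟫ = S γ ⟪f + (ContinuousLinearMap.adjoint K) (g - K f), e γ⟫)
    (fseq : ℕ → H)
    (hstep : ∀ n, fseq (n + 1) = T (fseq n))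
    (hfin : Φ (fseq 0) ≠ ⊤) :
    Summable (fun n => ‖fseq (n + 1) - fseq n‖ ^ 2) ∧
      Filter.Tendsto (fun n => ‖fseq (n + 1) - fseq n‖) Filter.atTop (nhds 0) := by
  classical
  have hK0 : (0:ℝ) ≤ ‖K‖ := norm_nonneg _
  have hε : (0:ℝ) < 1 - ‖K‖ ^ 2 := by nlinarith
  have hpen_nonneg : ∀ (a : H) (γ : Γ), 0 ≤ w γ * |⟪a, e γ⟫| ^ (p γ) := fun a γ =>
    mul_nonneg (hc.le.trans (hw γ)) (Real.rpow_nonneg (abs_nonneg _) _)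
  have coord : ∀ x y : H, HasSum (fun γ => ⟪x, e γ⟫ * ⟪y, e γ⟫) ⟪x, y⟫ := by
    intro x y
    have h := e.hasSum_inner_mul_inner x y
    simp only [show ∀ γ, ⟪e γ, y⟫ = ⟪y, e γ⟫ from fun γ => real_inner_comm _ _] at h
    exact h
  -- key single-step estimate
  have key : ∀ a : H, Summable (fun γ => w γ * |⟪a, e γ⟫| ^ (p γ)) →
      Summable (fun γ => w γ * |⟪T a, e γ⟫| ^ (p γ)) ∧
      ‖K (T a) - g‖ ^ 2 + (∑' γ, w γ * |⟪T a, e γ⟫| ^ (p γ))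
          + (1 - ‖K‖ ^ 2) * ‖T a - a‖ ^ 2 ≤
        ‖K a - g‖ ^ 2 + ∑' γ, w γ * |⟪a, e γ⟫| ^ (p γ) := by
    intro a hsa
    set b : H := a + (ContinuousLinearMap.adjoint K) (g - K a) with hb
    have hTc : ∀ γ, ⟪T a, e γ⟫ = S γ ⟪b, e γ⟫ := fun γ => by rw [hb]; exact hT a γ
    have hv : HasSum (fun γ => ⟪a, e γ⟫ * ⟪a, e γ⟫ - 2 * (⟪b, e γ⟫ * ⟪a, e γ⟫)
        + w γ * |⟪a, e γ⟫| ^ (p γ)) (⟪a, a⟫ - 2 * ⟪b, a⟫ + ∑' γ, w γ * |⟪a, e γ⟫| ^ (p γ)) :=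
      ((coord a a).sub ((coord b a).mul_left 2)).add hsa.hasSum
    have hbdd : ∀ γ, w γ * |⟪T a, e γ⟫| ^ (p γ) ≤
        (⟪a, e γ⟫ * ⟪a, e γ⟫ - 2 * (⟪b, e γ⟫ * ⟪a, e γ⟫) + w γ * |⟪a, e γ⟫| ^ (p γ))
          + ⟪b, e γ⟫ * ⟪b, e γ⟫ := by
      intro γ
      rw [hTc γ]
      nlinarith [hS γ ⟪b, e γ⟫ ⟪a, e γ⟫, sq_nonneg (S γ ⟪b, e γ⟫ - ⟪b, e γ⟫)]
    have hpsTa : Summable (fun γ => w γ * |⟪T a, e γ⟫| ^ (p γ)) :=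
      Summable.of_nonneg_of_le (hpen_nonneg (T a)) hbdd (hv.summable.add (coord b b).summable)
    refine ⟨hpsTa, ?_⟩
    have hu : HasSum (fun γ => ⟪T a, e γ⟫ * ⟪T a, e γ⟫ - 2 * (⟪b, e γ⟫ * ⟪T a, e γ⟫)
        + w γ * |⟪T a, e γ⟫| ^ (p γ))
        (⟪T a, T a⟫ - 2 * ⟪b, T a⟫ + ∑' γ, w γ * |⟪T a, e γ⟫| ^ (p γ)) :=
      ((coord (T a) (T a)).sub ((coord b (T a)).mul_left 2)).add hpsTa.hasSum
    have hle : ∀ γ, (⟪T a, e γ⟫ * ⟪T a, e γ⟫ - 2 * (⟪b, e γ⟫ * ⟪T a, e γ⟫)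
        + w γ * |⟪T a, e γ⟫| ^ (p γ)) ≤
        (⟪a, e γ⟫ * ⟪a, e γ⟫ - 2 * (⟪b, e γ⟫ * ⟪a, e γ⟫) + w γ * |⟪a, e γ⟫| ^ (p γ)) := by
      intro γ
      rw [hTc γ]
      nlinarith [hS γ ⟪b, e γ⟫ ⟪a, e γ⟫]
    have star := Summable.tsum_le_tsum hle hu.summable hv.summable
    rw [hu.tsum_eq, hv.tsum_eq] at star
    simp only [real_inner_self_eq_norm_sq] at star
    have f1 : ⟪b, T a⟫ - ⟪b, a⟫ = ⟪a, T a - a⟫ + ⟪g - K a, K (T a - a)⟫ := by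
      rw [← inner_sub_right, hb, inner_add_left, ContinuousLinearMap.adjoint_inner_left]
    have e1 : ‖T a - a‖ ^ 2 = ‖T a‖ ^ 2 - 2 * ⟪T a, a⟫ + ‖a‖ ^ 2 := norm_sub_sq_real _ _
    have e2 : ⟪a, T a - a⟫ = ⟪T a, a⟫ - ‖a‖ ^ 2 := by
      rw [inner_sub_right, real_inner_self_eq_norm_sq, real_inner_comm]
    have hKeq : K (T a) - g = K (T a - a) + (K a - g) := by rw [map_sub]; abel
    have e3 : ‖K (T a) - g‖ ^ 2
        = ‖K (T a - a)‖ ^ 2 + 2 * ⟪K (T a - a), K a - g⟫ + ‖K a - g‖ ^ 2 := by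
      rw [hKeq, norm_add_sq_real]
    have e4 : ‖K (T a - a)‖ ^ 2 ≤ ‖K‖ ^ 2 * ‖T a - a‖ ^ 2 := by
      have h := K.le_opNorm (T a - a)
      nlinarith [norm_nonneg (K (T a - a)), norm_nonneg (T a - a)]
    have e5 : ⟪g - K a, K (T a - a)⟫ = -⟪K (T a - a), K a - g⟫ := by
      rw [real_inner_comm, ← inner_neg_right, neg_sub]
    have hmul : (1 - ‖K‖ ^ 2) * ‖T a - a‖ ^ 2
        = ‖T a - a‖ ^ 2 - ‖K‖ ^ 2 * ‖T a - a‖ ^ 2 := by ring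
    linarith [star, f1, e1, e2, e3, e4, e5, hmul]
  -- summability along the sequence
  have hsum0 : Summable (fun γ => w γ * |⟪fseq 0, e γ⟫| ^ (p γ)) := by
    have h0 : (∑' γ, ENNReal.ofReal (w γ * |⟪fseq 0, e γ⟫| ^ (p γ))) ≠ ⊤ := by
      intro h
      exact hfin (by simp [hΦ (fseq 0), h])
    exact (ENNReal.summable_toReal h0).congr
      (fun γ => ENNReal.toReal_ofReal (hpen_nonneg (fseq 0) γ))
  have hsum : ∀ n, Summable (fun γ => w γ * |⟪fseq n, e γ⟫| ^ (p γ)) := by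
    intro n
    induction n with
    | zero => exact hsum0
    | succ n ih => rw [hstep n]; exact (key _ ih).1
  set Φs : ℕ → ℝ := fun n => ‖K (fseq n) - g‖ ^ 2 + ∑' γ, w γ * |⟪fseq n, e γ⟫| ^ (p γ)
    with hΦs
  have hΦsn : ∀ n, Φs n = ‖K (fseq n) - g‖ ^ 2 + ∑' γ, w γ * |⟪fseq n, e γ⟫| ^ (p γ) :=
    fun n => by rw [hΦs]
  have hΦs_nonneg : ∀ n, 0 ≤ Φs n := fun n => by
    rw [hΦsn]
    exact add_nonneg (sq_nonneg _) (tsum_nonneg (hpen_nonneg _))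
  have hdec : ∀ n, Φs (n+1) + (1 - ‖K‖ ^ 2) * ‖fseq (n+1) - fseq n‖ ^ 2 ≤ Φs n := by
    intro n
    rw [hΦsn, hΦsn, hstep n]
    exact (key (fseq n) (hsum n)).2
  have hpartial : ∀ N, (∑ i ∈ Finset.range N, (1 - ‖K‖ ^ 2) * ‖fseq (i+1) - fseq i‖ ^ 2)
      ≤ Φs 0 - Φs N := by
    intro N
    induction N with
    | zero => simp
    | succ N ih =>
      rw [Finset.sum_range_succ]
      have := hdec N
      linarith
  have hbound : ∀ N, (∑ i ∈ Finset.range N, ‖fseq (i+1) - fseq i‖ ^ 2)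
      ≤ Φs 0 / (1 - ‖K‖ ^ 2) := by
    intro N
    have h1 : (1 - ‖K‖ ^ 2) * ∑ i ∈ Finset.range N, ‖fseq (i+1) - fseq i‖ ^ 2 ≤ Φs 0 := by
      rw [Finset.mul_sum]
      linarith [hpartial N, hΦs_nonneg N]
    exact (le_div_iff₀' hε).mpr h1
  have hsummable : Summable (fun n => ‖fseq (n + 1) - fseq n‖ ^ 2) :=
    summable_of_sum_range_le (fun n => sq_nonneg _) hbound
  refine ⟨hsummable, ?_⟩
  have h2 := hsummable.tendsto_atTop_zero
  have h3 := h2.sqrt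
  rw [Real.sqrt_zero] at h3
  exact h3.congr (fun n => Real.sqrt_sq (norm_nonneg _))
end

section
/- Let H be a real Hilbert space, A : H → H a nonexpansive map (‖A(v) − A(v')‖ ≤ ‖v − v'‖ for all v, v' ∈ H), and v₀ ∈ H. Assume that ‖A^{n+1}(v₀) − A^n(v₀)‖ → 0 as n → ∞ and that A has at least one fixed point. Then there exists v* ∈ H with A(v*) = v* such that the sequence (A^n(v₀))_{n∈ℕ} converges weakly to v*. -/
/-!
Along any ultrafilter `U` finer than `atTop`, the bounded orbit `xₙ = Aⁿ v₀` converges weakly to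
some `w_U` (Banach–Alaoglu in the dual, pulled back by Riesz; ultrafilters replace subsequences, so
no separability is needed). Since `‖A xₙ - xₙ‖ → 0`, the demiclosedness principle makes `w_U` a
fixed point. For a fixed point `p` the distances `‖xₙ - p‖` decrease, so `⟪xₙ, w_U - w_V⟫`, a
combination of `‖xₙ - w_U‖²` and `‖xₙ - w_V‖²`, converges; its limits along `U` and `V` force
`w_U = w_V` (Opial). A sequence with the same limit along every ultrafilter finer than `atTop`
converges to it.
-/

open Filter Topology Function
open scoped RealInnerProductSpace

section Fejer

variable {E : Type*} [SeminormedAddCommGroup E] {A : E → E}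

theorem LipschitzWith.antitone_norm_iterate_sub (hA : LipschitzWith 1 A) {p : E}
    (hp : IsFixedPt A p) (v : E) : Antitone fun n => ‖A^[n] v - p‖ :=
  antitone_nat_of_succ_le fun n => by
    simpa [iterate_succ_apply', hp.eq] using hA.norm_sub_le (A^[n] v) p

theorem LipschitzWith.exists_tendsto_norm_iterate_sub (hA : LipschitzWith 1 A) {p : E}
    (hp : IsFixedPt A p) (v : E) : ∃ r, Tendsto (fun n => ‖A^[n] v - p‖) atTop (𝓝 r) :=
  ⟨_, tendsto_atTop_ciInf (hA.antitone_norm_iterate_sub hp v) ⟨0, by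
    rintro _ ⟨n, rfl⟩; exact norm_nonneg _⟩⟩

theorem LipschitzWith.norm_iterate_le (hA : LipschitzWith 1 A) {p : E} (hp : IsFixedPt A p)
    (v : E) (n : ℕ) : ‖A^[n] v‖ ≤ ‖v - p‖ + ‖p‖ :=
  calc ‖A^[n] v‖ ≤ ‖A^[n] v - p‖ + ‖p‖ := norm_le_norm_sub_add _ _
    _ ≤ ‖v - p‖ + ‖p‖ := by gcongr; exact hA.antitone_norm_iterate_sub hp v (Nat.zero_le n)

end Fejer

section Hilbert

variable {H : Type*} [NormedAddCommGroup H] [InnerProductSpace ℝ H]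

def TendstoWeakly {ι : Type*} (x : ι → H) (F : Filter ι) (w : H) : Prop :=
  ∀ y, Tendsto (fun i => ⟪x i, y⟫) F (𝓝 ⟪w, y⟫)

theorem exists_tendstoWeakly_of_ultrafilter [CompleteSpace H] {ι : Type*} (U : Ultrafilter ι)
    {x : ι → H} {R : ℝ} (hx : ∀ i, ‖x i‖ ≤ R) : ∃ w, TendstoWeakly x U w := by
  set φ : ι → WeakDual ℝ H := fun i => StrongDual.toWeakDual (InnerProductSpace.toDual ℝ H (x i))
  obtain ⟨ψ, -, hψ⟩ := (WeakDual.isCompact_closedBall (𝕜 := ℝ) 0 R).ultrafilter_le_nhds (U.map φ)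
    (le_principal_iff.2 (Ultrafilter.mem_map.2 (univ_mem' fun i => by simpa [φ] using hx i)))
  refine ⟨(InnerProductSpace.toDual ℝ H).symm (WeakDual.toStrongDual ψ), fun y => ?_⟩
  rw [InnerProductSpace.toDual_symm_apply]
  exact tendsto_iff_forall_eval_tendsto_topDualPairing.1 hψ y

theorem LipschitzWith.isFixedPt_of_tendstoWeakly {ι : Type*} {F : Filter ι} [F.NeBot]
    {A : H → H} (hA : LipschitzWith 1 A) {x : ι → H} {R : ℝ} (hx : ∀ i, ‖x i‖ ≤ R) {w : H}
    (hw : TendstoWeakly x F w) (hreg : Tendsto (fun i => ‖A (x i) - x i‖) F (𝓝 0)) :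
    IsFixedPt A w := by
  set d := w - A w
  set ε := fun i => ‖A (x i) - x i‖
  -- `‖x i - A w‖² - ‖x i - w‖² = ‖d‖² + 2⟪x i - w, d⟫`, where the inner product tends to `0`
  -- while nonexpansiveness makes the left side asymptotically `≤ 0`.
  have hbound : ∀ i, ‖d‖ ^ 2 ≤ ε i * (ε i + 2 * (R + ‖w‖)) - 2 * ⟪x i, d⟫ + 2 * ⟪w, d⟫ := by
    intro i
    have hε : 0 ≤ ε i := norm_nonneg _
    have hnear : ‖x i - A w‖ ≤ ε i + ‖x i - w‖ := calc
      ‖x i - A w‖ ≤ ‖x i - A (x i)‖ + ‖A (x i) - A w‖ := norm_sub_le_norm_sub_add_norm_sub _ _ _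
      _ ≤ ε i + ‖x i - w‖ := by
        rw [norm_sub_rev]
        gcongr
        simpa using hA.norm_sub_le (x i) w
    have hfar : ‖x i - w‖ ≤ R + ‖w‖ := (_root_.norm_sub_le _ _).trans (by linarith [hx i])
    have hexpand : ‖x i - A w‖ ^ 2 = ‖x i - w‖ ^ 2 + 2 * ⟪x i - w, d⟫ + ‖d‖ ^ 2 := by
      rw [← sub_add_sub_cancel (x i) w (A w)]
      exact norm_add_sq_real _ _
    rw [inner_sub_left] at hexpand
    nlinarith [norm_nonneg (x i - A w), norm_nonneg (x i - w)]
  have hlim : Tendsto (fun i => ε i * (ε i + 2 * (R + ‖w‖)) - 2 * ⟪x i, d⟫ + 2 * ⟪w, d⟫) F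
      (𝓝 0) := by
    simpa using ((hreg.mul (hreg.add_const _)).sub ((hw d).const_mul 2)).add_const (2 * ⟪w, d⟫)
  have hd : ‖d‖ ^ 2 ≤ 0 := ge_of_tendsto hlim (Eventually.of_forall hbound)
  exact (sub_eq_zero.1 (by simpa [d] using hd)).symm

theorem TendstoWeakly.eq_of_tendsto_norm_sub {ι : Type*} {l F G : Filter ι} [F.NeBot]
    [G.NeBot] (hF : F ≤ l) (hG : G ≤ l) {x : ι → H} {w₁ w₂ : H} {r₁ r₂ : ℝ}
    (h₁ : Tendsto (fun i => ‖x i - w₁‖) l (𝓝 r₁)) (h₂ : Tendsto (fun i => ‖x i - w₂‖) l (𝓝 r₂))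
    (hw₁ : TendstoWeakly x F w₁) (hw₂ : TendstoWeakly x G w₂) : w₁ = w₂ := by
  have hpolar : ∀ i,
      ⟪x i, w₁ - w₂⟫ = (‖x i - w₂‖ ^ 2 - ‖x i - w₁‖ ^ 2 + ‖w₁‖ ^ 2 - ‖w₂‖ ^ 2) / 2 := by
    intro i
    rw [inner_sub_right, norm_sub_sq_real, norm_sub_sq_real]
    ring
  have hγ : Tendsto (fun i => ⟪x i, w₁ - w₂⟫) l
      (𝓝 ((r₂ ^ 2 - r₁ ^ 2 + ‖w₁‖ ^ 2 - ‖w₂‖ ^ 2) / 2)) := by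
    simp only [hpolar]
    exact ((((h₂.pow 2).sub (h₁.pow 2)).add_const _).sub_const _).div_const 2
  have e₁ := tendsto_nhds_unique (hw₁ (w₁ - w₂)) (hγ.mono_left hF)
  have e₂ := tendsto_nhds_unique (hw₂ (w₁ - w₂)) (hγ.mono_left hG)
  rw [← sub_eq_zero, ← inner_self_eq_zero (𝕜 := ℝ), inner_sub_left, e₁, e₂, sub_self]

end Hilbert

/-- If `A` is nonexpansive on a real Hilbert space, has a fixed point, and its iterates from
`v₀` are asymptotically regular, then the iterates converge weakly to some fixed point. -/
theorem stmt_13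
    {H : Type*} [NormedAddCommGroup H] [InnerProductSpace ℝ H] [CompleteSpace H]
    (A : H → H) (hA : ∀ v v' : H, ‖A v - A v'‖ ≤ ‖v - v'‖)
    (v0 : H)
    (hreg : Filter.Tendsto (fun n => ‖A^[n + 1] v0 - A^[n] v0‖) Filter.atTop (nhds 0))
    (hfix : ∃ v : H, A v = v) :
    ∃ vstar : H, A vstar = vstar ∧
      ∀ y : H, Filter.Tendsto (fun n => ⟪A^[n] v0, y⟫) Filter.atTop (nhds ⟪vstar, y⟫) := by
  obtain ⟨p, hp⟩ := hfix
  have hA' : LipschitzWith 1 A := .of_dist_le_mul fun v v' => by simpa [dist_eq_norm] using hA v v'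
  have hbdd := hA'.norm_iterate_le hp v0
  have hasymp : Tendsto (fun n => ‖A (A^[n] v0) - A^[n] v0‖) atTop (𝓝 0) := by
    simpa only [iterate_succ_apply'] using hreg
  have hcluster : ∀ U : Ultrafilter ℕ, (U : Filter ℕ) ≤ atTop →
      ∃ w, IsFixedPt A w ∧ TendstoWeakly (fun n => A^[n] v0) U w := by
    intro U hU
    obtain ⟨w, hw⟩ := exists_tendstoWeakly_of_ultrafilter U hbdd
    exact ⟨w, hA'.isFixedPt_of_tendstoWeakly hbdd hw (hasymp.mono_left hU), hw⟩
  obtain ⟨v, hv, hvU⟩ := hcluster (.of atTop) (Ultrafilter.of_le _)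
  refine ⟨v, hv, fun y => (tendsto_iff_ultrafilter _ _ _).2 fun U hU => ?_⟩
  obtain ⟨w, hw, hwU⟩ := hcluster U hU
  obtain ⟨r, hr⟩ := hA'.exists_tendsto_norm_iterate_sub hv v0
  obtain ⟨s, hs⟩ := hA'.exists_tendsto_norm_iterate_sub hw v0
  rw [← hwU.eq_of_tendsto_norm_sub hU (Ultrafilter.of_le _) hs hr hvU]
  exact hwU y
end

section
/- Let H be a real Hilbert space, A : H → H a nonexpansive map (‖A(v) − A(v')‖ ≤ ‖v − v'‖ for all v, v' ∈ H), and v₀ ∈ H with ‖A^{n+1}(v₀) − A^n(v₀)‖ → 0 as n → ∞. If some subsequence (A^{n_k}(v₀))_{k∈ℕ} converges weakly to an element v' ∈ H, then v' is a fixed point of A, i.e. A(v') = v'. -/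
open scoped RealInnerProductSpace

/-- Demiclosedness: if `A` is nonexpansive, the iterates from `v₀` are asymptotically
regular, and a subsequence of the iterates converges weakly to `v'`, then `v'` is a fixed
point of `A`. -/
theorem stmt_14
    {H : Type*} [NormedAddCommGroup H] [InnerProductSpace ℝ H] [CompleteSpace H]
    (A : H → H) (hA : ∀ v v' : H, ‖A v - A v'‖ ≤ ‖v - v'‖)
    (v0 : H)
    (hreg : Filter.Tendsto (fun n => ‖A^[n + 1] v0 - A^[n] v0‖) Filter.atTop (nhds 0))
    (nk : ℕ → ℕ) (hnk : StrictMono nk) (v' : H)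
    (hweak : ∀ y : H,
      Filter.Tendsto (fun k => ⟪A^[nk k] v0, y⟫) Filter.atTop (nhds ⟪v', y⟫)) :
    A v' = v' := by
  set x : ℕ → H := fun k => A^[nk k] v0 with hx
  set u : H := v' - A v' with hu
  set ε : ℕ → ℝ := fun k => ‖A^[nk k + 1] v0 - A^[nk k] v0‖ with hε
  -- boundedness of the sequence via Banach–Steinhaus
  obtain ⟨C, hC⟩ : ∃ C : ℝ, ∀ k, ‖x k‖ ≤ C := by
    obtain ⟨C', hC'⟩ := banach_steinhaus
      (g := fun k : ℕ => innerSL ℝ (x k)) (fun y => by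
        obtain ⟨C, hC⟩ := ((hweak y).norm).bddAbove_range
        exact ⟨C, fun k => hC ⟨k, rfl⟩⟩)
    refine ⟨C', fun k => ?_⟩
    simpa [innerSL_apply_norm] using hC' k
  -- the key per-k inequality
  have key : ∀ k, ‖u‖ ^ 2 ≤
      ε k ^ 2 + 2 * ε k * (C + ‖v'‖) + (2 * ⟪v', u⟫ - 2 * ⟪x k, u⟫) := by
    intro k
    have hAx : A^[nk k + 1] v0 = A (x k) := Function.iterate_succ_apply' A (nk k) v0
    have hεnn : 0 ≤ ε k := norm_nonneg _
    have h1 : ‖x k - A v'‖ ≤ ε k + ‖x k - v'‖ := by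
      calc ‖x k - A v'‖ = ‖(x k - A (x k)) + (A (x k) - A v')‖ := by abel_nf
        _ ≤ ‖x k - A (x k)‖ + ‖A (x k) - A v'‖ := norm_add_le _ _
        _ ≤ ε k + ‖x k - v'‖ := by
            gcongr
            · show ‖x k - A (x k)‖ ≤ ‖A^[nk k + 1] v0 - A^[nk k] v0‖
              rw [hAx, norm_sub_rev]
            · exact hA _ _
    have h2 : ‖x k - A v'‖ ^ 2 ≤ (ε k + ‖x k - v'‖) ^ 2 :=
      pow_le_pow_left₀ (norm_nonneg _) h1 2
    have h3 : ‖x k - A v'‖ ^ 2 = ‖x k - v'‖ ^ 2 + 2 * ⟪x k - v', u⟫ + ‖u‖ ^ 2 := by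
      have : x k - A v' = (x k - v') + u := by rw [hu]; abel
      rw [this, norm_add_sq_real]
    have h4 : ‖x k - v'‖ ≤ C + ‖v'‖ :=
      (norm_sub_le _ _).trans (by gcongr; exact hC k)
    have h5 : ⟪x k - v', u⟫ = ⟪x k, u⟫ - ⟪v', u⟫ := by
      rw [inner_sub_left]
    nlinarith [norm_nonneg (x k - v'), sq_nonneg (ε k)]
  -- passing to the limit
  have hεlim : Filter.Tendsto ε Filter.atTop (nhds 0) :=
    hreg.comp hnk.tendsto_atTop
  have hinner : Filter.Tendsto (fun k => ⟪x k, u⟫) Filter.atTop (nhds ⟪v', u⟫) :=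
    hweak u
  have hlim : Filter.Tendsto
      (fun k => ε k ^ 2 + 2 * ε k * (C + ‖v'‖) + (2 * ⟪v', u⟫ - 2 * ⟪x k, u⟫))
      Filter.atTop (nhds 0) := by
    have h := ((hεlim.pow 2).add
      (((hεlim.const_mul 2).mul_const (C + ‖v'‖)))).add
      ((tendsto_const_nhds (x := (2 : ℝ) * ⟪v', u⟫)).sub (hinner.const_mul 2))
    simpa using h
  have hle : ‖u‖ ^ 2 ≤ 0 :=
    ge_of_tendsto hlim (Filter.Eventually.of_forall key)
  have : u = 0 := by
    have := le_antisymm hle (sq_nonneg _)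
    simpa [pow_eq_zero_iff] using this
  rw [hu, sub_eq_zero] at this
  exact this.symm
end

section
/- Let H be a real Hilbert space with orthonormal (Hilbert) basis (e_γ)_{γ∈Γ} indexed by a countable set Γ, let (w_γ)_{γ∈Γ} be weights with w_γ ≥ c for a fixed c > 0, and let (p_γ)_{γ∈Γ} be exponents with 1 ≤ p_γ ≤ 2. Suppose a sequence (v_k)_{k∈ℕ} in H converges weakly to v ∈ H, that Σ_γ w_γ |⟨v, e_γ⟩|^{p_γ} < ∞, and that Σ_γ w_γ |⟨v_k, e_γ⟩|^{p_γ} → Σ_γ w_γ |⟨v, e_γ⟩|^{p_γ} as k → ∞. Then (v_k) converges to v in norm: ‖v − v_k‖ → 0 as k → ∞. -/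
/-!
Weak convergence gives convergence of every coefficient `⟪v_k, e_γ⟫ → ⟪v, e_γ⟫`, hence of the
penalty of every coefficient. Since also the total penalties converge to a finite limit, the
penalty tails outside a large finite set of indices are eventually uniformly small (a Scheffé-type
argument). A coefficient with penalty `w |x|^p ≤ c ≤ w` has `|x| ≤ 1`, so `c x² ≤ c |x|^p ≤ w |x|^p`
because `p ≤ 2`: small penalty tails force small `ℓ²` tails. Uniformly small `ℓ²` tails together
with coefficientwise convergence give `Σ_γ |⟪v - v_k, e_γ⟫|² → 0`, which is `‖v - v_k‖²` by
Parseval.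
-/

open scoped RealInnerProductSpace ENNReal

open Filter Topology

section TailEstimates

variable {ι Γ : Type*} {l : Filter ι}

lemma ENNReal.exists_tsum_compl_lt_of_tendsto_tsum {f : ι → Γ → ℝ≥0∞} {g : Γ → ℝ≥0∞}
    (hf : ∀ γ, Tendsto (fun k => f k γ) l (𝓝 (g γ))) (hg : ∑' γ, g γ ≠ ∞)
    (hsum : Tendsto (fun k => ∑' γ, f k γ) l (𝓝 (∑' γ, g γ))) {ε : ℝ≥0∞} (hε : 0 < ε) :
    ∃ F : Finset Γ, ∑' γ : ↥(F : Set Γ)ᶜ, g γ < ε ∧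
      ∀ᶠ k in l, ∑' γ : ↥(F : Set Γ)ᶜ, f k γ < ε := by
  have tail_eq {h : Γ → ℝ≥0∞} (F : Finset Γ) (htop : ∑' γ, h γ ≠ ∞) :
      ∑' γ : ↥(F : Set Γ)ᶜ, h γ = ∑' γ, h γ - ∑ γ ∈ F, h γ := by
    refine ENNReal.eq_sub_of_add_eq ?_ (by rw [add_comm, ENNReal.sum_add_tsum_compl])
    exact ne_top_of_le_ne_top htop (by rw [← ENNReal.sum_add_tsum_compl F h]; exact le_self_add)
  obtain ⟨F, hF⟩ := ((ENNReal.tendsto_tsum_compl_atTop_zero hg).eventually (gt_mem_nhds hε)).exists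
  refine ⟨F, hF, ?_⟩
  have htail : Tendsto (fun k => ∑' γ, f k γ - ∑ γ ∈ F, f k γ) l
      (𝓝 (∑' γ : ↥(F : Set Γ)ᶜ, g γ)) := by
    rw [tail_eq F hg]
    exact ENNReal.Tendsto.sub hsum (tendsto_finsetSum F fun γ _ => hf γ) (Or.inl hg)
  filter_upwards [htail.eventually (gt_mem_nhds hF), hsum.eventually_lt_const hg.lt_top]
    with k hk hk_top
  rwa [tail_eq F hk_top.ne]

lemma ENNReal.tendsto_tsum_nhds_zero_of_tsum_compl_le {d : ι → Γ → ℝ≥0∞}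
    (hd : ∀ γ, Tendsto (fun k => d k γ) l (𝓝 0))
    (htail : ∀ ε > 0, ∃ F : Finset Γ, ∀ᶠ k in l, ∑' γ : ↥(F : Set Γ)ᶜ, d k γ ≤ ε) :
    Tendsto (fun k => ∑' γ, d k γ) l (𝓝 0) := by
  rw [ENNReal.tendsto_nhds_zero]
  intro ε hε
  obtain ⟨F, hF⟩ := htail (ε / 2) (ENNReal.half_pos hε.ne')
  have hfin : Tendsto (fun k => ∑ γ ∈ F, d k γ) l (𝓝 0) := by
    simpa using tendsto_finsetSum F fun γ _ => hd γ
  filter_upwards [hF, ENNReal.tendsto_nhds_zero.1 hfin (ε / 2) (ENNReal.half_pos hε.ne')]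
    with k hk_tail hk_fin
  rw [← ENNReal.sum_add_tsum_compl F]
  exact (add_le_add hk_fin hk_tail).trans (ENNReal.add_halves ε).le

end TailEstimates

lemma mul_sq_le_mul_abs_rpow {c w p x : ℝ} (hc : 0 < c) (hw : c ≤ w) (hp : 0 < p) (hp2 : p ≤ 2)
    (hx : w * |x| ^ p ≤ c) : c * x ^ 2 ≤ w * |x| ^ p := by
  have habs : |x| ≤ 1 := by
    by_contra! h
    have := mul_lt_mul_of_pos_left (Real.one_lt_rpow h hp) (hc.trans_le hw)
    linarith
  have hsq : x ^ 2 ≤ |x| ^ p := by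
    calc x ^ 2 = |x| ^ (2 : ℝ) := by rw [Real.rpow_two, sq_abs]
      _ ≤ |x| ^ p := Real.rpow_le_rpow_of_exponent_ge' (abs_nonneg x) habs hp.le hp2
  calc c * x ^ 2 ≤ w * x ^ 2 := by gcongr
    _ ≤ w * |x| ^ p := by gcongr; linarith

lemma ENNReal.ofReal_sub_sq_le (a b : ℝ) :
    ENNReal.ofReal ((b - a) ^ 2) ≤ 2 * ENNReal.ofReal (b ^ 2) + 2 * ENNReal.ofReal (a ^ 2) := by
  rw [← ENNReal.ofReal_ofNat 2, ← ENNReal.ofReal_mul zero_le_two, ← ENNReal.ofReal_mul zero_le_two,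
    ← ENNReal.ofReal_add (by positivity) (by positivity)]
  exact ENNReal.ofReal_le_ofReal (by nlinarith [sq_nonneg (a + b)])

section WeightedPenalty

variable {Γ : Type*}

noncomputable def weightedPenalty (w p x : Γ → ℝ) (γ : Γ) : ℝ≥0∞ :=
  ENNReal.ofReal (w γ * |x γ| ^ p γ)

variable {w p : Γ → ℝ} {c : ℝ} (hc : 0 < c) (hw : ∀ γ, c ≤ w γ) (hp : ∀ γ, 0 < p γ ∧ p γ ≤ 2)
include hc hw hp

lemma ofReal_mul_tsum_sq_le_tsum_weightedPenalty {x : Γ → ℝ} {s : Set Γ}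
    (hx : ∑' γ : s, weightedPenalty w p x γ ≤ ENNReal.ofReal c) :
    ENNReal.ofReal c * ∑' γ : s, ENNReal.ofReal (x γ ^ 2) ≤ ∑' γ : s, weightedPenalty w p x γ := by
  rw [← ENNReal.tsum_mul_left]
  refine ENNReal.tsum_le_tsum fun γ => ?_
  have hγ : w γ * |x γ| ^ p γ ≤ c :=
    (ENNReal.ofReal_le_ofReal_iff hc.le).1 ((ENNReal.le_tsum γ).trans hx)
  rw [← ENNReal.ofReal_mul hc.le]
  exact ENNReal.ofReal_le_ofReal
    (mul_sq_le_mul_abs_rpow hc (hw γ) (hp γ).1 (hp γ).2 hγ)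

theorem tendsto_tsum_sq_sub_of_tendsto_tsum_weightedPenalty {ι : Type*} {l : Filter ι}
    {a : ι → Γ → ℝ} {b : Γ → ℝ} (hab : ∀ γ, Tendsto (fun k => a k γ) l (𝓝 (b γ)))
    (hfin : ∑' γ, weightedPenalty w p b γ ≠ ∞)
    (hconv : Tendsto (fun k => ∑' γ, weightedPenalty w p (a k) γ) l
      (𝓝 (∑' γ, weightedPenalty w p b γ))) :
    Tendsto (fun k => ∑' γ, ENNReal.ofReal ((b γ - a k γ) ^ 2)) l (𝓝 0) := by
  have hpen (γ : Γ) : Tendsto (fun k => weightedPenalty w p (a k) γ) l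
      (𝓝 (weightedPenalty w p b γ)) :=
    ENNReal.tendsto_ofReal
      ((((hab γ).abs).rpow_const (Or.inr (hp γ).1.le)).const_mul (w γ))
  refine ENNReal.tendsto_tsum_nhds_zero_of_tsum_compl_le (fun γ => ?_) fun ε hε => ?_
  · simpa using ENNReal.tendsto_ofReal (((tendsto_const_nhds (x := b γ)).sub (hab γ)).pow 2)
  set C := ENNReal.ofReal c
  have hC : C ≠ 0 := (ENNReal.ofReal_pos.2 hc).ne'
  set δ := min C (C * ε / 4)
  have hδ : 0 < δ := lt_min (ENNReal.ofReal_pos.2 hc)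
    (ENNReal.div_pos (mul_ne_zero hC hε.ne') ENNReal.ofNat_ne_top)
  obtain ⟨F, hbF, haF⟩ := ENNReal.exists_tsum_compl_lt_of_tendsto_tsum hpen hfin hconv hδ
  refine ⟨F, haF.mono fun k hk => ?_⟩
  have hb := ofReal_mul_tsum_sq_le_tsum_weightedPenalty hc hw hp (hbF.le.trans (min_le_left _ _))
  have ha := ofReal_mul_tsum_sq_le_tsum_weightedPenalty hc hw hp (hk.le.trans (min_le_left _ _))
  refine (ENNReal.mul_le_mul_iff_right hC ENNReal.ofReal_ne_top).1 ?_
  calc C * ∑' γ : ↥(F : Set Γ)ᶜ, ENNReal.ofReal ((b γ - a k γ) ^ 2)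
      ≤ C * ∑' γ : ↥(F : Set Γ)ᶜ,
          (2 * ENNReal.ofReal (b γ ^ 2) + 2 * ENNReal.ofReal (a k γ ^ 2)) := by
        gcongr with γ; exact ENNReal.ofReal_sub_sq_le _ _
    _ = 2 * (C * ∑' γ : ↥(F : Set Γ)ᶜ, ENNReal.ofReal (b γ ^ 2))
          + 2 * (C * ∑' γ : ↥(F : Set Γ)ᶜ, ENNReal.ofReal (a k γ ^ 2)) := by
        rw [ENNReal.tsum_add, ENNReal.tsum_mul_left, ENNReal.tsum_mul_left]; ring
    _ ≤ 2 * δ + 2 * δ := by gcongr; exacts [hb.trans hbF.le, ha.trans hk.le]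
    _ ≤ 4 * (C * ε / 4) := by rw [← add_mul]; norm_num; gcongr; exact min_le_right _ _
    _ = C * ε := ENNReal.mul_div_cancel (by norm_num) (by norm_num)

end WeightedPenalty

lemma HilbertBasis.ofReal_norm_sq_eq_tsum {H Γ : Type*} [NormedAddCommGroup H]
    [InnerProductSpace ℝ H] (e : HilbertBasis Γ ℝ H) (x : H) :
    ENNReal.ofReal (‖x‖ ^ 2) = ∑' γ, ENNReal.ofReal (⟪x, e γ⟫ ^ 2) := by
  have h := e.hasSum_inner_mul_inner x x
  simp only [real_inner_comm x, ← sq, real_inner_self_eq_norm_sq] at h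
  rw [← h.tsum_eq, ENNReal.ofReal_tsum_of_nonneg (fun γ => sq_nonneg _) h.summable]

theorem stmt_17_general
    {H : Type*} [NormedAddCommGroup H] [InnerProductSpace ℝ H]
    {Γ : Type*}
    (e : HilbertBasis Γ ℝ H)
    (w : Γ → ℝ) (c : ℝ) (hc : 0 < c) (hw : ∀ γ, c ≤ w γ)
    (p : Γ → ℝ) (hp : ∀ γ, 1 ≤ p γ ∧ p γ ≤ 2)
    (vk : ℕ → H) (v : H)
    (hweak : ∀ y : H, Filter.Tendsto (fun k => ⟪vk k, y⟫) Filter.atTop (nhds ⟪v, y⟫))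
    (hfin : (∑' γ, ENNReal.ofReal (w γ * |⟪v, e γ⟫| ^ (p γ))) ≠ ⊤)
    (hconv : Filter.Tendsto
      (fun k => ∑' γ, ENNReal.ofReal (w γ * |⟪vk k, e γ⟫| ^ (p γ)))
      Filter.atTop (nhds (∑' γ, ENNReal.ofReal (w γ * |⟪v, e γ⟫| ^ (p γ))))) :
    Filter.Tendsto (fun k => ‖v - vk k‖) Filter.atTop (nhds 0) := by
  have hsq : Tendsto (fun k => ENNReal.ofReal (‖v - vk k‖ ^ 2)) atTop (𝓝 0) := by
    simp only [e.ofReal_norm_sq_eq_tsum, inner_sub_left]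
    exact tendsto_tsum_sq_sub_of_tendsto_tsum_weightedPenalty (w := w) (p := p) hc hw
      (fun γ => ⟨by linarith [hp γ], (hp γ).2⟩) (fun γ => hweak (e γ)) hfin hconv
  have hsq_real : Tendsto (fun k => ‖v - vk k‖ ^ 2) atTop (𝓝 0) := by
    simpa only [Function.comp_def, ENNReal.toReal_ofReal (sq_nonneg _), ENNReal.toReal_zero] using
      (ENNReal.tendsto_toReal ENNReal.zero_ne_top).comp hsq
  simpa using hsq_real.sqrt

/-- Radon–Riesz-type property: if `v_k ⇀ v` weakly, the penalty `Σ_γ w_γ |⟨v,e_γ⟩|^{p_γ}` of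
`v` is finite, and the penalties of the `v_k` converge to that of `v`, then `v_k → v` in
norm. -/
theorem stmt_17
    {H : Type*} [NormedAddCommGroup H] [InnerProductSpace ℝ H] [CompleteSpace H]
    {Γ : Type*} [Countable Γ]
    (e : HilbertBasis Γ ℝ H)
    (w : Γ → ℝ) (c : ℝ) (hc : 0 < c) (hw : ∀ γ, c ≤ w γ)
    (p : Γ → ℝ) (hp : ∀ γ, 1 ≤ p γ ∧ p γ ≤ 2)
    (vk : ℕ → H) (v : H)
    (hweak : ∀ y : H, Filter.Tendsto (fun k => ⟪vk k, y⟫) Filter.atTop (nhds ⟪v, y⟫))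
    (hfin : (∑' γ, ENNReal.ofReal (w γ * |⟪v, e γ⟫| ^ (p γ))) ≠ ⊤)
    (hconv : Filter.Tendsto
      (fun k => ∑' γ, ENNReal.ofReal (w γ * |⟪vk k, e γ⟫| ^ (p γ)))
      Filter.atTop (nhds (∑' γ, ENNReal.ofReal (w γ * |⟪v, e γ⟫| ^ (p γ))))) :
    Filter.Tendsto (fun k => ‖v - vk k‖) Filter.atTop (nhds 0) :=
  stmt_17_general e w c hc hw p hp vk v hweak hfin hconv
end

section
/- Let H and H' be real Hilbert spaces, (e_γ)_{γ∈Γ} an orthonormal (Hilbert) basis of H indexed by a countable set Γ, K : H → H' a bounded linear operator, (w_γ)_{γ∈Γ} weights with w_γ ≥ c for a fixed c > 0, and (p_γ)_{γ∈Γ} exponents with 1 ≤ p_γ ≤ 2; define the penalty N(f) = Σ_γ w_γ |⟨f, e_γ⟩|^{p_γ} ∈ [0, ∞]. Let f₀ ∈ H and S = { f ∈ H : K f = K f₀ }. Assume either (a) K is injective, or (b) p_γ > 1 for every γ ∈ Γ and there exists some f ∈ S with N(f) < ∞. Then there is a unique element f† ∈ S that is minimal with respect to N, i.e. N(f†) ≤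 N(f) for all f ∈ S, and any other element of S with this property equals f†. -/
/-!
This is the direct method of the calculus of variations in the weak topology. The penalty `N` is a
sum of nonnegative weakly continuous terms, hence weakly lower semicontinuous, and since
`w γ ≥ c > 0` and `1 ≤ p γ ≤ 2` its sublevel sets are norm bounded, by Parseval and
`t ^ 2 ≤ max 1 (t ^ p) * t ^ p` for `t ≥ 0`. The fibre `{f | K f = K f₀}` is weakly closed and
closed balls are weakly compact (Banach–Alaoglu through the Riesz isomorphism), so `N` attains
its minimum on the fibre. When every `p γ > 1` the map `t ↦ |t| ^ p γ` is strictly convex, so the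
midpoint of two distinct minimizers, which again lies in the fibre, would have strictly smaller
penalty. When `K` is injective the fibre is `{f₀}`.
-/

open scoped RealInnerProductSpace ENNReal
open Metric InnerProductSpace

theorem sq_le_max_one_rpow_mul_rpow {a p : ℝ} (ha : 0 ≤ a) (hp₁ : 1 ≤ p) (hp₂ : p ≤ 2) :
    a ^ 2 ≤ max 1 (a ^ p) * a ^ p := by
  have hap : 0 ≤ a ^ p := Real.rpow_nonneg ha p
  rcases le_total a 1 with ha1 | ha1
  · calc a ^ 2 = a ^ (2 : ℝ) := (Real.rpow_natCast a 2).symm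
      _ ≤ a ^ p := Real.rpow_le_rpow_of_exponent_ge' ha ha1 (by linarith) hp₂
      _ ≤ max 1 (a ^ p) * a ^ p := le_mul_of_one_le_left hap (le_max_left _ _)
  · calc a ^ 2 = a ^ (2 : ℝ) := (Real.rpow_natCast a 2).symm
      _ ≤ a ^ (p + p) := Real.rpow_le_rpow_of_exponent_le ha1 (by linarith)
      _ = a ^ p * a ^ p := Real.rpow_add (by linarith) p p
      _ ≤ max 1 (a ^ p) * a ^ p := mul_le_mul_of_nonneg_right (le_max_right _ _) hap

theorem abs_add_div_two_rpow_lt {p x y : ℝ} (hp : 1 < p) (hxy : x ≠ y) :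
    |(x + y) / 2| ^ p < (|x| ^ p + |y| ^ p) / 2 := by
  have hp₀ : 0 < p := by linarith
  have h_tri : |(x + y) / 2| ≤ (|x| + |y|) / 2 := by
    rw [abs_div, abs_two]
    linarith [abs_add_le x y]
  rcases eq_or_ne |x| |y| with hxy_abs | hxy_abs
  · -- `x = -y`, so the midpoint is `0`
    have hx : x ≠ 0 := by rintro rfl; simp_all [eq_comm]
    have hmid : (x + y) / 2 = 0 := by
      rcases abs_eq_abs.mp hxy_abs with h | h
      · exact absurd h hxy
      · rw [h]; ring
    rw [hmid, abs_zero, Real.zero_rpow hp₀.ne', ← hxy_abs]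
    linarith [Real.rpow_pos_of_pos (abs_pos.2 hx) p]
  · have h := (strictConvexOn_rpow hp).2 (Set.mem_Ici.2 (abs_nonneg x))
      (Set.mem_Ici.2 (abs_nonneg y)) hxy_abs (by norm_num : (0 : ℝ) < 1 / 2)
      (by norm_num : (0 : ℝ) < 1 / 2) (by norm_num)
    simp only [smul_eq_mul] at h
    calc |(x + y) / 2| ^ p ≤ ((|x| + |y|) / 2) ^ p :=
          Real.rpow_le_rpow (abs_nonneg _) h_tri hp₀.le
      _ = (1 / 2 * |x| + 1 / 2 * |y|) ^ p := by ring_nf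
      _ < 1 / 2 * |x| ^ p + 1 / 2 * |y| ^ p := h
      _ = (|x| ^ p + |y| ^ p) / 2 := by ring

section WeakTopology

variable {H : Type*} [NormedAddCommGroup H] [InnerProductSpace ℝ H]

theorem isClosed_toWeakSpace_setOf_apply_eq {F : Type*} [NormedAddCommGroup F] [NormedSpace ℝ F]
    (K : H →L[ℝ] F) (y : F) : IsClosed (toWeakSpace ℝ H '' {f | K f = y}) := by
  have h : toWeakSpace ℝ H '' {f | K f = y} = WeakSpace.map K ⁻¹' {y} := by
    ext x
    exact ⟨by rintro ⟨f, hf, rfl⟩; exact hf, fun hx => ⟨x, hx, rfl⟩⟩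
  rw [h]
  exact isClosed_singleton.preimage (WeakSpace.map K).continuous

theorem continuous_inner_toWeakSpace_symm (v : H) :
    Continuous fun x : WeakSpace ℝ H => ⟪(toWeakSpace ℝ H).symm x, v⟫ := by
  refine (WeakBilin.eval_continuous (topDualPairing ℝ H).flip (innerSL ℝ v)).congr fun x => ?_
  exact real_inner_comm _ _

variable [CompleteSpace H]

theorem isCompact_toWeakSpace_closedBall (r : ℝ) :
    IsCompact (toWeakSpace ℝ H '' closedBall 0 r) := by
  let Φ : WeakDual ℝ H → WeakSpace ℝ H := fun φ =>
    toWeakSpace ℝ H ((toDual ℝ H).symm (WeakDual.toStrongDual φ))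
  have hΦ : Continuous Φ := by
    refine WeakBilin.continuous_of_continuous_eval _ fun ℓ => ?_
    convert WeakDual.eval_continuous ((toDual ℝ H).symm ℓ) using 2 with φ
    change ℓ ((toDual ℝ H).symm (WeakDual.toStrongDual φ)) = WeakDual.toStrongDual φ _
    rw [← toDual_symm_apply (y := ℓ), real_inner_comm, toDual_symm_apply]
  convert (WeakDual.isCompact_closedBall (0 : StrongDual ℝ H) r).image hΦ
  ext x
  constructor
  · rintro ⟨y, hy, rfl⟩
    exact ⟨WeakDual.toStrongDual.symm (toDual ℝ H y), by simpa using hy, by simp [Φ]⟩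
  · rintro ⟨φ, hφ, rfl⟩
    exact ⟨_, by simpa using hφ, rfl⟩

theorem exists_isMinOn_of_lowerSemicontinuous_toWeakSpace {β : Type*} [LinearOrder β]
    {F : H → β} (hF : LowerSemicontinuous fun x : WeakSpace ℝ H => F ((toWeakSpace ℝ H).symm x))
    {S : Set H} (hS : IsClosed (toWeakSpace ℝ H '' S)) {f₁ : H} (hf₁ : f₁ ∈ S)
    (hbdd : Bornology.IsBounded {f | F f ≤ F f₁}) :
    ∃ g ∈ S, IsMinOn F S g := by
  obtain ⟨r, hr⟩ := hbdd.subset_closedBall 0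
  set T := toWeakSpace ℝ H '' S ∩ {x | F ((toWeakSpace ℝ H).symm x) ≤ F f₁}
  have hT : IsCompact T := by
    refine (isCompact_toWeakSpace_closedBall r).of_isClosed_subset
      (hS.inter (hF.isClosed_preimage _)) ?_
    rintro _ ⟨⟨f, -, rfl⟩, hf⟩
    exact ⟨f, hr hf, rfl⟩
  obtain ⟨x, ⟨⟨g, hg, rfl⟩, hgf₁⟩, hmin⟩ :=
    (hF.lowerSemicontinuousOn T).exists_isMinOn
      (⟨toWeakSpace ℝ H f₁, ⟨f₁, hf₁, rfl⟩, le_rfl⟩ : T.Nonempty) hT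
  refine ⟨g, hg, fun f hf => ?_⟩
  rcases le_or_gt (F f) (F f₁) with hff₁ | hff₁
  · exact hmin ⟨⟨f, hf, rfl⟩, hff₁⟩
  · exact hgf₁.trans hff₁.le

end WeakTopology

namespace HilbertBasis

variable {Γ H : Type*} [NormedAddCommGroup H] [InnerProductSpace ℝ H] (e : HilbertBasis Γ ℝ H)
  {w p : Γ → ℝ}

noncomputable def penalty (w p : Γ → ℝ) (f : H) : ℝ≥0∞ :=
  ∑' γ, ENNReal.ofReal (w γ * |⟪f, e γ⟫| ^ p γ)

theorem lowerSemicontinuous_penalty_toWeakSpace (hp : ∀ γ, 0 ≤ p γ) :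
    LowerSemicontinuous fun x : WeakSpace ℝ H => e.penalty w p ((toWeakSpace ℝ H).symm x) :=
  lowerSemicontinuous_tsum fun γ => Continuous.lowerSemicontinuous <|
    ENNReal.continuous_ofReal.comp <| continuous_const.mul <|
      (Real.continuous_rpow_const (hp γ)).comp (continuous_inner_toWeakSpace_symm (e γ)).abs

theorem ofReal_norm_sq_eq_tsum_s18 (f : H) :
    ENNReal.ofReal (‖f‖ ^ 2) = ∑' γ, ENNReal.ofReal (⟪f, e γ⟫ ^ 2) := by
  have h := e.hasSum_inner_mul_inner f f
  simp only [real_inner_comm f, real_inner_self_eq_norm_sq, ← sq] at h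
  rw [← h.tsum_eq, ENNReal.ofReal_tsum_of_nonneg (fun _ => sq_nonneg _) h.summable]

theorem isBounded_setOf_penalty_le {c : ℝ} (hc : 0 < c) (hw : ∀ γ, c ≤ w γ)
    (hp : ∀ γ, 1 ≤ p γ ∧ p γ ≤ 2) {a : ℝ≥0∞} (ha : a ≠ ⊤) :
    Bornology.IsBounded {f | e.penalty w p f ≤ a} := by
  set R := a.toReal / c
  have hR : 0 ≤ R := by positivity
  refine isBounded_iff_forall_norm_le.2 ⟨√(max 1 R * R), fun f hf => ?_⟩
  set x : Γ → ℝ := fun γ => |⟪f, e γ⟫| ^ p γ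
  have hx : ∀ γ, 0 ≤ x γ := fun γ => Real.rpow_nonneg (abs_nonneg _) _
  have hsum : ∑' γ, ENNReal.ofReal (x γ) ≤ ENNReal.ofReal R := by
    rw [ENNReal.ofReal_div_of_pos hc, ENNReal.ofReal_toReal ha, ENNReal.le_div_iff_mul_le
      (.inl (by simpa using hc)) (.inl ENNReal.ofReal_ne_top), mul_comm, ← ENNReal.tsum_mul_left]
    refine le_trans (ENNReal.tsum_le_tsum fun γ => ?_) hf
    rw [← ENNReal.ofReal_mul hc.le]
    exact ENNReal.ofReal_le_ofReal (mul_le_mul_of_nonneg_right (hw γ) (hx γ))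
  have hxR : ∀ γ, x γ ≤ R := fun γ =>
    (ENNReal.ofReal_le_ofReal_iff hR).1 ((ENNReal.le_tsum γ).trans hsum)
  have hnorm : ENNReal.ofReal (‖f‖ ^ 2) ≤ ENNReal.ofReal (max 1 R * R) :=
    calc ENNReal.ofReal (‖f‖ ^ 2)
        = ∑' γ, ENNReal.ofReal (⟪f, e γ⟫ ^ 2) := e.ofReal_norm_sq_eq_tsum_s18 f
      _ ≤ ∑' γ, ENNReal.ofReal (max 1 R) * ENNReal.ofReal (x γ) := by
        refine ENNReal.tsum_le_tsum fun γ => ?_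
        rw [← ENNReal.ofReal_mul (by positivity), ← sq_abs]
        refine ENNReal.ofReal_le_ofReal ((sq_le_max_one_rpow_mul_rpow (abs_nonneg _)
          (hp γ).1 (hp γ).2).trans ?_)
        gcongr
        exact hxR γ
      _ ≤ ENNReal.ofReal (max 1 R) * ENNReal.ofReal R := by
        rw [ENNReal.tsum_mul_left]; gcongr
      _ = ENNReal.ofReal (max 1 R * R) := (ENNReal.ofReal_mul (by positivity)).symm
  rw [ENNReal.ofReal_le_ofReal_iff (by positivity)] at hnorm
  exact Real.le_sqrt_of_sq_le hnorm

theorem exists_inner_ne_of_ne {f g : H} (hfg : f ≠ g) : ∃ γ, ⟪f, e γ⟫ ≠ ⟪g, e γ⟫ := by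
  by_contra! h
  refine hfg (e.repr.injective (lp.ext (funext fun γ => ?_)))
  simp only [e.repr_apply_apply, real_inner_comm, h γ]

theorem penalty_midpoint_lt (hw : ∀ γ, 0 < w γ) (hp : ∀ γ, 1 < p γ) {f g : H} (hfg : f ≠ g)
    (hf : e.penalty w p f ≠ ⊤) (hg : e.penalty w p g ≠ ⊤) :
    e.penalty w p (midpoint ℝ f g) < (e.penalty w p f + e.penalty w p g) / 2 := by
  set X : H → Γ → ℝ≥0∞ := fun h γ => ENNReal.ofReal (w γ * |⟪h, e γ⟫| ^ p γ)
  have hmid : ∀ γ, ⟪midpoint ℝ f g, e γ⟫ = (⟪f, e γ⟫ + ⟪g, e γ⟫) / 2 := fun γ => by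
    simp only [midpoint_eq_smul_add, inner_add_left, real_inner_smul_left]
    simp [div_eq_inv_mul]
  have hlt : ∀ γ, ⟪f, e γ⟫ ≠ ⟪g, e γ⟫ → X (midpoint ℝ f g) γ < (X f γ + X g γ) / 2 := by
    intro γ hγ
    have hnn : ∀ h : H, 0 ≤ w γ * |⟪h, e γ⟫| ^ p γ := fun h =>
      mul_nonneg (hw γ).le (Real.rpow_nonneg (abs_nonneg _) _)
    simp only [X]
    rw [← ENNReal.ofReal_add (hnn f) (hnn g), ← ENNReal.ofReal_ofNat 2,
      ← ENNReal.ofReal_div_of_pos two_pos,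
      ENNReal.ofReal_lt_ofReal_iff_of_nonneg (hnn _), hmid]
    calc w γ * |(⟪f, e γ⟫ + ⟪g, e γ⟫) / 2| ^ p γ
        < w γ * ((|⟪f, e γ⟫| ^ p γ + |⟪g, e γ⟫| ^ p γ) / 2) :=
          mul_lt_mul_of_pos_left (abs_add_div_two_rpow_lt (hp γ) hγ) (hw γ)
      _ = _ := by ring
  have hle : ∀ γ, X (midpoint ℝ f g) γ ≤ (X f γ + X g γ) / 2 := by
    intro γ
    by_cases hγ : ⟪f, e γ⟫ = ⟪g, e γ⟫
    · simp only [X, hmid, hγ, add_self_div_two, ENNReal.add_div, ENNReal.add_halves, le_rfl]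
    · exact (hlt γ hγ).le
  have hsum : ∑' γ, (X f γ + X g γ) / 2 = (e.penalty w p f + e.penalty w p g) / 2 := by
    simp only [div_eq_mul_inv, ENNReal.tsum_mul_right, ENNReal.tsum_add]
    rfl
  obtain ⟨γ₀, hγ₀⟩ := e.exists_inner_ne_of_ne hfg
  refine (ENNReal.tsum_lt_tsum ?_ hle (hlt γ₀ hγ₀)).trans_eq hsum
  refine ne_top_of_le_ne_top ?_ (ENNReal.tsum_le_tsum hle)
  rw [hsum]
  exact ENNReal.div_ne_top (ENNReal.add_ne_top.2 ⟨hf, hg⟩) two_ne_zero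

theorem eq_of_isMinOn_penalty (hw : ∀ γ, 0 < w γ) (hp : ∀ γ, 1 < p γ) {S : Set H}
    (hS : Convex ℝ S) {f g : H} (hf : f ∈ S) (hg : g ∈ S) (hf_min : IsMinOn (e.penalty w p) S f)
    (hg_min : IsMinOn (e.penalty w p) S g) (hf_fin : e.penalty w p f ≠ ⊤) : f = g := by
  by_contra hfg
  have hgf : e.penalty w p g = e.penalty w p f := le_antisymm (hg_min hf) (hf_min hg)
  have hlt := e.penalty_midpoint_lt hw hp hfg hf_fin (hgf ▸ hf_fin)
  rw [hgf, ENNReal.add_div, ENNReal.add_halves] at hlt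
  exact (hf_min (hS.midpoint_mem hf hg)).not_gt hlt

end HilbertBasis

theorem stmt_18_general
    {H H' : Type*} [NormedAddCommGroup H] [InnerProductSpace ℝ H] [CompleteSpace H]
    [NormedAddCommGroup H'] [InnerProductSpace ℝ H']
    {Γ : Type*}
    (e : HilbertBasis Γ ℝ H)
    (K : H →L[ℝ] H')
    (w : Γ → ℝ) (c : ℝ) (hc : 0 < c) (hw : ∀ γ, c ≤ w γ)
    (p : Γ → ℝ) (hp : ∀ γ, 1 ≤ p γ ∧ p γ ≤ 2)
    (Nf : H → ℝ≥0∞)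
    (hNf : ∀ f, Nf f = ∑' γ, ENNReal.ofReal (w γ * |⟪f, e γ⟫| ^ (p γ)))
    (f0 : H)
    (hcase : Function.Injective K ∨
      ((∀ γ, 1 < p γ) ∧ ∃ f : H, K f = K f0 ∧ Nf f ≠ ⊤)) :
    ∃! fd : H, K fd = K f0 ∧ ∀ f : H, K f = K f0 → Nf fd ≤ Nf f := by
  obtain rfl : Nf = e.penalty w p := funext hNf
  rcases hcase with hK | ⟨hp₁, f₁, hf₁, hf₁_fin⟩
  · exact ⟨f0, ⟨rfl, fun f hf => hK hf ▸ le_rfl⟩, fun f hf => hK hf.1⟩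
  obtain ⟨g, hg, hg_min⟩ := exists_isMinOn_of_lowerSemicontinuous_toWeakSpace
    (e.lowerSemicontinuous_penalty_toWeakSpace fun γ => zero_le_one.trans (hp γ).1)
    (isClosed_toWeakSpace_setOf_apply_eq K (K f0)) hf₁
    (e.isBounded_setOf_penalty_le hc hw hp hf₁_fin)
  refine ⟨g, ⟨hg, fun f hf => hg_min hf⟩, fun f ⟨hf, hf_min⟩ => ?_⟩
  exact e.eq_of_isMinOn_penalty (fun γ => hc.trans_le (hw γ)) hp₁
    ((convex_singleton (K f0)).linear_preimage K.toLinearMap) hf hg hf_min hg_min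
    (ne_top_of_le_ne_top hf₁_fin (hf_min f₁ hf₁))

/-- Existence and uniqueness of the `N`-minimal element of `S = {f : Kf = Kf₀}`, assuming
either `K` injective, or all `p γ > 1` together with the existence of some `f ∈ S` of finite
penalty. -/
theorem stmt_18
    {H H' : Type*} [NormedAddCommGroup H] [InnerProductSpace ℝ H] [CompleteSpace H]
    [NormedAddCommGroup H'] [InnerProductSpace ℝ H'] [CompleteSpace H']
    {Γ : Type*} [Countable Γ]
    (e : HilbertBasis Γ ℝ H)
    (K : H →L[ℝ] H')
    (w : Γ → ℝ) (c : ℝ) (hc : 0 < c) (hw : ∀ γ, c ≤ w γ)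
    (p : Γ → ℝ) (hp : ∀ γ, 1 ≤ p γ ∧ p γ ≤ 2)
    (Nf : H → ℝ≥0∞)
    (hNf : ∀ f, Nf f = ∑' γ, ENNReal.ofReal (w γ * |⟪f, e γ⟫| ^ (p γ)))
    (f0 : H)
    (hcase : Function.Injective K ∨
      ((∀ γ, 1 < p γ) ∧ ∃ f : H, K f = K f0 ∧ Nf f ≠ ⊤)) :
    ∃! fd : H, K fd = K f0 ∧ ∀ f : H, K f = K f0 → Nf fd ≤ Nf f :=
  stmt_18_general e K w c hc hw p hp Nf hNf f0 hcase
end
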